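/- arXiv:1706.01633 — 5 statements merged into one kernel-verified Lean document; each statement's English description precedes it below -/
import Mathlib

section
/- Let H be a connected subgraph of a finite directed weighted graph G satisfying the Kirchhoff assumption, with #V_G = n and #V_H = r. Then for every 1 ≤ k ≤ r, the k-th smallest eigenvalue of S_H is at most the (n − r + k)-th smallest eigenvalue of S_G: λ_k(S_H) ≤ λ_{n−r+k}(S_G). -/
open Finset

/-- The weighted inner product `(f,g)_m = ∑_x m(x) f(x) conj(g(x))` on functions `W → ℂ`. -/
noncomputable def innerM {W : Type*} [Fintype W] (m : W → ℝ) (f g : W → ℂ) : ℂ :=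
  ∑ x, (m x : ℂ) * f x * (starRingEnd ℂ) (g x)

/-- The self-adjoint operator `S f(x) = (1/m(x)) ∑_y a(x,y) (f(x) - f(y))`, where
`a(x,y) = b(x,y) + b(y,x)`. -/
noncomputable def opS {W : Type*} [Fintype W] (m : W → ℝ) (b : W → W → ℝ)
    (f : W → ℂ) (x : W) : ℂ :=
  (1 / (m x : ℂ)) * ∑ y, ((b x y + b y x : ℝ) : ℂ) * (f x - f y)

/-- `μ : Fin N → ℝ` lists, increasingly and with multiplicity, eigenvalues of the operator
`S` which is self-adjoint for the weighted inner product with weight `m`: `μ` is monotone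
and there is a corresponding `m`-orthonormal family of eigenfunctions.  When
`N = dim = card W`, such a family is an orthonormal basis, so `μ` is exactly the increasing
enumeration `λ_1 ≤ … ≤ λ_N` of the eigenvalues of `S` with multiplicity. -/
def IsMonoEigenListing {W : Type*} [Fintype W] (m : W → ℝ)
    (S : (W → ℂ) → (W → ℂ)) {N : ℕ} (μ : Fin N → ℝ) : Prop :=
  Monotone μ ∧ ∃ u : Fin N → (W → ℂ),
    (∀ i j, innerM m (u i) (u j) = if i = j then 1 else 0) ∧
    ∀ i, S (u i) = fun x => ((μ i : ℝ) : ℂ) * u i x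

/-- `x` and `y` are neighbours in the directed weighted graph with edge weight `b`. -/
def Nbr {V : Type*} (b : V → V → ℝ) (x y : V) : Prop := 0 < b x y ∨ 0 < b y x

/-- Kirchhoff assumption: `β⁺(x) = β⁻(x)` for all `x`. -/
def Kirchhoff {V : Type*} [Fintype V] (b : V → V → ℝ) : Prop :=
  ∀ x, ∑ y, b x y = ∑ y, b y x

/-- The graph with edge weight `b` is connected, ignoring orientation. -/
def ConnectedGraph {V : Type*} (b : V → V → ℝ) : Prop :=
  ∀ x y : V, Relation.ReflTransGen (Nbr b) x y

/-- The subgraph of `b` induced on `U` is connected, ignoring orientation. -/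
def ConnOn {V : Type*} (b : V → V → ℝ) (U : Finset V) : Prop :=
  ∀ x ∈ U, ∀ y ∈ U,
    Relation.ReflTransGen (fun u v => u ∈ U ∧ v ∈ U ∧ Nbr b u v) x y

/-- The interior of a set of vertices: those of its vertices all of whose neighbours lie
in the set. -/
def interiorSet {V : Type*} (b : V → V → ℝ) (Ω : Set V) : Set V :=
  {x | x ∈ Ω ∧ ∀ y, Nbr b x y → y ∈ Ω}

/-- The operator `S_H` of the subgraph induced on `U` (weights restricted from the ambient
graph), acting on functions `↥U → ℂ`. -/
noncomputable def opSsub {V : Type*} [Fintype V] (m : V → ℝ) (b : V → V → ℝ)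
    (U : Finset V) : (↥U → ℂ) → (↥U → ℂ) :=
  opS (fun x : ↥U => m ↑x) (fun x y : ↥U => b ↑x ↑y)

/-- The Dirichlet operator `S^D_U`, acting on functions supported in `U` (identified with
functions `↥U → ℂ`, extended by zero): `S^D_U f(x) = (1/m(x)) ∑_{y ∈ V} a(x,y)(f(x)-f(y))`
for `x ∈ U`. -/
noncomputable def opSDir {V : Type*} [Fintype V] [DecidableEq V] (m : V → ℝ) (b : V → V → ℝ)
    (U : Finset V) (f : ↥U → ℂ) (x : ↥U) : ℂ :=
  (1 / (m ↑x : ℂ)) * ∑ y : V, ((b ↑x y + b y ↑x : ℝ) : ℂ) *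
    (f x - (if h : y ∈ U then f ⟨y, h⟩ else 0))

/-- The Dirichlet Laplacian `Δ^D_U`, acting on functions supported in `U`:
`Δ^D_U f(x) = (1/m(x)) ∑_{y ∈ V} b(x,y)(f(x)-f(y))` for `x ∈ U`. -/
noncomputable def opDeltaDir {V : Type*} [Fintype V] [DecidableEq V] (m : V → ℝ) (b : V → V → ℝ)
    (U : Finset V) (f : ↥U → ℂ) (x : ↥U) : ℂ :=
  (1 / (m ↑x : ℂ)) * ∑ y : V, ((b ↑x y : ℝ) : ℂ) *
    (f x - (if h : y ∈ U then f ⟨y, h⟩ else 0))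

namespace Stmt9Aux

variable {W : Type*} [Fintype W]

lemma innerM_self_eq (m : W → ℝ) (f : W → ℂ) :
    innerM m f f = ((∑ x, m x * Complex.normSq (f x) : ℝ) : ℂ) := by
  simp only [innerM]
  push_cast
  refine Finset.sum_congr rfl fun x _ => ?_
  rw [mul_assoc, Complex.mul_conj]

lemma innerM_self_pos (m : W → ℝ) (hm : ∀ x, 0 < m x) (f : W → ℂ) (hf : f ≠ 0) :
    0 < ∑ x, m x * Complex.normSq (f x) := by
  obtain ⟨x0, hx0⟩ : ∃ x, f x ≠ 0 := by
    by_contra h; push_neg at h; exact hf (funext fun x => h x)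
  refine Finset.sum_pos' (fun x _ => mul_nonneg (hm x).le (Complex.normSq_nonneg _)) ?_
  exact ⟨x0, Finset.mem_univ _, mul_pos (hm x0) (Complex.normSq_pos.mpr hx0)⟩

lemma innerM_sum_left (m : W → ℝ) {ι : Type*} (s : Finset ι) (c : ι → ℂ)
    (u : ι → W → ℂ) (g : W → ℂ) :
    innerM m (fun x => ∑ i ∈ s, c i * u i x) g = ∑ i ∈ s, c i * innerM m (u i) g := by
  simp only [innerM, Finset.mul_sum, Finset.sum_mul]
  rw [Finset.sum_comm]
  exact Finset.sum_congr rfl fun i _ => Finset.sum_congr rfl fun x _ => by ring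

lemma innerM_sum_right (m : W → ℝ) {ι : Type*} (s : Finset ι) (c : ι → ℂ)
    (u : ι → W → ℂ) (g : W → ℂ) :
    innerM m g (fun x => ∑ j ∈ s, c j * u j x)
      = ∑ j ∈ s, (starRingEnd ℂ) (c j) * innerM m g (u j) := by
  simp only [innerM, map_sum, map_mul, Finset.mul_sum, Finset.sum_mul]
  rw [Finset.sum_comm]
  exact Finset.sum_congr rfl fun j _ => Finset.sum_congr rfl fun x _ => by ring

lemma innerM_expand (m : W → ℝ) {ι : Type*} [Fintype ι] [DecidableEq ι] {u : ι → W → ℂ}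
    (horth : ∀ i j, innerM m (u i) (u j) = if i = j then 1 else 0) (c d : ι → ℂ) :
    innerM m (fun x => ∑ i, c i * u i x) (fun x => ∑ j, d j * u j x)
      = ∑ i, c i * (starRingEnd ℂ) (d i) := by
  rw [innerM_sum_left]
  refine Finset.sum_congr rfl fun i _ => ?_
  rw [innerM_sum_right]
  simp [horth, mul_comm]

lemma orth_li (m : W → ℝ) {ι : Type*} [Fintype ι] [DecidableEq ι] {u : ι → W → ℂ}
    (horth : ∀ i j, innerM m (u i) (u j) = if i = j then 1 else 0) :
    LinearIndependent ℂ u := by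
  rw [Fintype.linearIndependent_iff]
  intro c hc j
  have key : ∑ i, c i * innerM m (u i) (u j) = 0 := by
    rw [← innerM_sum_left]
    have hzero : (fun x => ∑ i, c i * u i x) = (fun _ : W => (0:ℂ)) := by
      funext x
      simpa [Finset.sum_apply] using congrFun hc x
    rw [hzero]
    simp [innerM]
  simpa [horth] using key

lemma opS_sum (m : W → ℝ) (b : W → W → ℝ) {ι : Type*} [Fintype ι]
    (c : ι → ℂ) (u : ι → W → ℂ) :
    opS m b (fun x => ∑ i, c i * u i x) = fun x => ∑ i, c i * opS m b (u i) x := by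
  funext x
  simp only [opS, ← Finset.sum_sub_distrib, Finset.mul_sum]
  rw [Finset.sum_comm]
  exact Finset.sum_congr rfl fun i _ => Finset.sum_congr rfl fun y _ => by ring

lemma Q_eq (m : W → ℝ) (b : W → W → ℝ) (hm : ∀ x, m x ≠ 0) (f : W → ℂ) :
    innerM m (opS m b f) f =
      (((1/2) * ∑ x, ∑ y, (b x y + b y x) * Complex.normSq (f x - f y) : ℝ) : ℂ) := by
  have h1 : innerM m (opS m b f) f
      = ∑ x, ∑ y, ((b x y + b y x : ℝ) : ℂ) * (f x - f y) * (starRingEnd ℂ) (f x) := by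
    simp only [innerM, opS]
    refine Finset.sum_congr rfl fun x _ => ?_
    have hmx : ((m x : ℝ) : ℂ) ≠ 0 := Complex.ofReal_ne_zero.mpr (hm x)
    rw [show ((m x : ℝ) : ℂ) * ((1 / ((m x : ℝ) : ℂ)) * ∑ y, ((b x y + b y x : ℝ) : ℂ) * (f x - f y))
        * (starRingEnd ℂ) (f x)
        = (∑ y, ((b x y + b y x : ℝ) : ℂ) * (f x - f y)) * (starRingEnd ℂ) (f x) from by
      field_simp]
    rw [Finset.sum_mul]
  have h2 : (∑ x, ∑ y, ((b x y + b y x : ℝ) : ℂ) * (f x - f y) * (starRingEnd ℂ) (f x))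
      = ∑ x, ∑ y, ((b x y + b y x : ℝ) : ℂ) * (f y - f x) * (starRingEnd ℂ) (f y) := by
    rw [Finset.sum_comm]
    refine Finset.sum_congr rfl fun x _ => Finset.sum_congr rfl fun y _ => ?_
    congr 2
    push_cast
    ring
  have h3 : (2 : ℂ) * innerM m (opS m b f) f
      = ∑ x, ∑ y, ((b x y + b y x : ℝ) : ℂ) * ((Complex.normSq (f x - f y) : ℝ) : ℂ) := by
    rw [two_mul, h1]
    nth_rewrite 2 [h2]
    rw [← Finset.sum_add_distrib]
    refine Finset.sum_congr rfl fun x _ => ?_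
    rw [← Finset.sum_add_distrib]
    refine Finset.sum_congr rfl fun y _ => ?_
    rw [show ((b x y + b y x : ℝ) : ℂ) * (f x - f y) * (starRingEnd ℂ) (f x)
        + ((b x y + b y x : ℝ) : ℂ) * (f y - f x) * (starRingEnd ℂ) (f y)
        = ((b x y + b y x : ℝ) : ℂ) * ((f x - f y) * (starRingEnd ℂ) (f x - f y)) from by
      rw [map_sub]; ring]
    rw [Complex.mul_conj]
  have h4 := h3
  push_cast at h4 ⊢
  linear_combination (1/2 : ℂ) * h4

section Ext
set_option linter.unusedSectionVars false
variable {V : Type*} [Fintype V] [DecidableEq V]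

noncomputable def extFun (U : Finset V) (g : ↥U → ℂ) : V → ℂ :=
  fun x => if h : x ∈ U then g ⟨x, h⟩ else 0

lemma extFun_coe (U : Finset V) (g : ↥U → ℂ) (x : ↥U) : extFun U g ↑x = g x := by
  simp [extFun]

lemma extFun_of_notMem (U : Finset V) (g : ↥U → ℂ) {x : V} (hx : x ∉ U) :
    extFun U g x = 0 := by simp [extFun, hx]

lemma innerM_extFun (m : V → ℝ) (U : Finset V) (g h : ↥U → ℂ) :
    innerM m (extFun U g) (extFun U h) = innerM (fun x : ↥U => m ↑x) g h := by
  simp only [innerM]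
  rw [show (∑ x : V, (m x : ℂ) * extFun U g x * (starRingEnd ℂ) (extFun U h x))
      = ∑ x ∈ U, (m x : ℂ) * extFun U g x * (starRingEnd ℂ) (extFun U h x) from
    (Finset.sum_subset U.subset_univ (fun x _ hx => by
      simp [extFun_of_notMem U g hx])).symm]
  rw [← Finset.sum_coe_sort U]
  exact Finset.sum_congr rfl fun x _ => by rw [extFun_coe, extFun_coe]

lemma D_le (b : V → V → ℝ) (hb : ∀ x y, 0 ≤ b x y) (U : Finset V) (f : V → ℂ) :
    (∑ x : ↥U, ∑ y : ↥U, (b ↑x ↑y + b ↑y ↑x) * Complex.normSq (f ↑x - f ↑y))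
      ≤ ∑ x : V, ∑ y : V, (b x y + b y x) * Complex.normSq (f x - f y) := by
  have hnn : ∀ x y : V, 0 ≤ (b x y + b y x) * Complex.normSq (f x - f y) := fun x y =>
    mul_nonneg (add_nonneg (hb _ _) (hb _ _)) (Complex.normSq_nonneg _)
  calc (∑ x : ↥U, ∑ y : ↥U, (b ↑x ↑y + b ↑y ↑x) * Complex.normSq (f ↑x - f ↑y))
      = ∑ x ∈ U, ∑ y ∈ U, (b x y + b y x) * Complex.normSq (f x - f y) := by
        rw [← Finset.sum_coe_sort U (fun x => ∑ y ∈ U, (b x y + b y x) * Complex.normSq (f x - f y))]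
        exact Finset.sum_congr rfl fun x _ =>
          (Finset.sum_coe_sort U (fun y => (b ↑x y + b y ↑x) * Complex.normSq (f ↑x - f y)))
    _ ≤ ∑ x ∈ U, ∑ y : V, (b x y + b y x) * Complex.normSq (f x - f y) :=
        Finset.sum_le_sum fun x _ =>
          Finset.sum_le_sum_of_subset_of_nonneg U.subset_univ (fun y _ _ => hnn x y)
    _ ≤ ∑ x : V, ∑ y : V, (b x y + b y x) * Complex.normSq (f x - f y) :=
        Finset.sum_le_sum_of_subset_of_nonneg U.subset_univ
          (fun x _ _ => Finset.sum_nonneg fun y _ => hnn x y)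
end Ext

end Stmt9Aux

/-- if `H` is a connected subgraph (on vertex set `U`, `#U = r`) of a finite
directed weighted graph `G` (`#V = n`) satisfying the Kirchhoff assumption, then for every
`1 ≤ k ≤ r`, `λ_k(S_H) ≤ λ_{n-r+k}(S_G)`. -/
theorem stmt9 {V : Type*} [Fintype V] (m : V → ℝ) (b : V → V → ℝ)
    (hm : ∀ x, 0 < m x) (hb : ∀ x y, 0 ≤ b x y) (hloop : ∀ x, b x x = 0)
    (hconn : ConnectedGraph b) (hkirch : Kirchhoff b)
    (U : Finset V) (hUconn : ConnOn b U)
    (n r : ℕ) (hn : n = Fintype.card V) (hr : r = U.card) (hrn : r ≤ n)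
    (μG : Fin n → ℝ) (μH : Fin r → ℝ)
    (hμG : IsMonoEigenListing m (opS m b) μG)
    (hμH : IsMonoEigenListing (fun x : ↥U => m ↑x) (opSsub m b U) μH) :
    ∀ k : Fin r, μH k ≤ μG ⟨n - r + k.1, by have := k.isLt; omega⟩ := by
  classical
  obtain ⟨hGmono, uG, hGorth, hGeig⟩ := hμG
  obtain ⟨hHmono, uH, hHorth, hHeig⟩ := hμH
  intro k
  have hk : k.1 < r := k.isLt
  -- index embeddings
  set embH : Fin (r - k.1) → Fin r := fun i => ⟨k.1 + i.1, by omega⟩ with hembH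
  set embG : Fin (n - r + k.1 + 1) → Fin n :=
    (fun j => ⟨j.1, by have := j.isLt; omega⟩) with hembG
  have hembHinj : Function.Injective embH := by
    intro i j hij
    have := congrArg Fin.val hij
    simp only [hembH] at this
    exact Fin.ext (by omega)
  have hembGinj : Function.Injective embG := by
    intro i j hij
    have := congrArg Fin.val hij
    simp only [hembG] at this
    exact Fin.ext this
  -- restricted weights
  set mU : ↥U → ℝ := fun x => m ↑x with hmU
  set bU : ↥U → ↥U → ℝ := fun x y => b ↑x ↑y with hbU
  -- families
  set w : Fin (r - k.1) → (V → ℂ) := fun i => Stmt9Aux.extFun U (uH (embH i)) with hw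
  set u' : Fin (n - r + k.1 + 1) → (V → ℂ) := fun j => uG (embG j) with hu'
  have hHorth' : ∀ i j, innerM mU (uH (embH i)) (uH (embH j)) = if i = j then 1 else 0 := by
    intro i j
    rw [hHorth]
    by_cases h : i = j
    · simp [h]
    · rw [if_neg (fun he => h (hembHinj he)), if_neg h]
  have hworth : ∀ i j, innerM m (w i) (w j) = if i = j then 1 else 0 := by
    intro i j
    rw [hw]
    rw [Stmt9Aux.innerM_extFun]
    exact hHorth' i j
  have hu'orth : ∀ i j, innerM m (u' i) (u' j) = if i = j then 1 else 0 := by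
    intro i j
    rw [hu', hGorth]
    by_cases h : i = j
    · simp [h]
    · rw [if_neg (fun he => h (hembGinj he)), if_neg h]
  -- spans and dimension count
  have hpli := Stmt9Aux.orth_li m hworth
  have hqli := Stmt9Aux.orth_li m hu'orth
  set p := Submodule.span ℂ (Set.range w) with hp
  set q := Submodule.span ℂ (Set.range u') with hq
  have hpd : Module.finrank ℂ p = r - k.1 := by
    rw [hp, finrank_span_eq_card hpli, Fintype.card_fin]
  have hqd : Module.finrank ℂ q = n - r + k.1 + 1 := by
    rw [hq, finrank_span_eq_card hqli, Fintype.card_fin]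
  have htot : Module.finrank ℂ (V → ℂ) = n := by rw [Module.finrank_pi, hn]
  have hne : p ⊓ q ≠ ⊥ := by
    intro hbot
    have h1 := Submodule.finrank_sup_add_finrank_inf_eq p q
    rw [hbot, hpd, hqd] at h1
    have h2 : Module.finrank ℂ ↥(p ⊔ q) ≤ n := htot ▸ Submodule.finrank_le _
    have h3 : Module.finrank ℂ (⊥ : Submodule ℂ (V → ℂ)) = 0 := finrank_bot ℂ _
    rw [h3] at h1
    omega
  obtain ⟨f, hfpq, hfne⟩ := (Submodule.ne_bot_iff _).mp hne
  obtain ⟨hfp, hfq⟩ := Submodule.mem_inf.mp hfpq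
  obtain ⟨c, hc⟩ := (Submodule.mem_span_range_iff_exists_fun ℂ).mp hfp
  obtain ⟨d, hd⟩ := (Submodule.mem_span_range_iff_exists_fun ℂ).mp hfq
  have hfc : f = fun x => ∑ i, c i * w i x := by
    funext x; rw [← hc]; simp [Finset.sum_apply]
  have hfd : f = fun x => ∑ j, d j * u' j x := by
    funext x; rw [← hd]; simp [Finset.sum_apply]
  -- restriction to U
  set g : ↥U → ℂ := fun x => ∑ i, c i * uH (embH i) x with hg
  have hfg : f = Stmt9Aux.extFun U g := by
    funext x
    by_cases hx : x ∈ U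
    · rw [hfc, show Stmt9Aux.extFun U g x = g ⟨x, hx⟩ from dif_pos hx, hg]
      refine Finset.sum_congr rfl fun i _ => ?_
      rw [hw]
      show c i * Stmt9Aux.extFun U (uH (embH i)) x = c i * uH (embH i) ⟨x, hx⟩
      rw [show Stmt9Aux.extFun U (uH (embH i)) x = uH (embH i) ⟨x, hx⟩ from dif_pos hx]
    · rw [hfc, Stmt9Aux.extFun_of_notMem U g hx]
      refine Finset.sum_eq_zero fun i _ => ?_
      rw [hw]
      simp [Stmt9Aux.extFun_of_notMem U _ hx]
  have hgf : ∀ x : ↥U, g x = f ↑x := by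
    intro x; rw [hfg, Stmt9Aux.extFun_coe]
  -- norms
  have hNf : innerM m f f = ((∑ j, Complex.normSq (d j) : ℝ) : ℂ) := by
    conv_lhs => rw [hfd]
    rw [hu'] at *
    rw [Stmt9Aux.innerM_expand m hu'orth d d]
    push_cast
    exact Finset.sum_congr rfl fun j _ => Complex.mul_conj _
  have hNg : innerM mU g g = ((∑ i, Complex.normSq (c i) : ℝ) : ℂ) := by
    conv_lhs => rw [hg]
    rw [Stmt9Aux.innerM_expand mU hHorth' c c]
    push_cast
    exact Finset.sum_congr rfl fun i _ => Complex.mul_conj _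
  have hNfg : innerM m f f = innerM mU g g := by
    rw [hfg, hmU, Stmt9Aux.innerM_extFun]
  have hND : (∑ j, Complex.normSq (d j)) = ∑ i, Complex.normSq (c i) := by
    have := hNfg
    rw [hNf, hNg] at this
    exact_mod_cast this
  have hpos : 0 < ∑ i, Complex.normSq (c i) := by
    have h1 := Stmt9Aux.innerM_self_eq m f
    have h2 : (∑ x, m x * Complex.normSq (f x)) = ∑ i, Complex.normSq (c i) := by
      have := h1.symm.trans (hNfg.trans hNg)
      exact_mod_cast this
    rw [← h2]
    exact Stmt9Aux.innerM_self_pos m hm f hfne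
  -- quadratic form on G
  have hSf : opS m b f = fun x => ∑ j, (((μG (embG j) : ℝ) : ℂ) * d j) * uG (embG j) x := by
    conv_lhs => rw [hfd]
    rw [hu']
    rw [Stmt9Aux.opS_sum m b d (fun j => uG (embG j))]
    funext x
    refine Finset.sum_congr rfl fun j _ => ?_
    rw [show opS m b (uG (embG j)) = fun x => ((μG (embG j) : ℝ) : ℂ) * uG (embG j) x from
      hGeig (embG j)]
    ring
  have hQG : innerM m (opS m b f) f
      = ((∑ j, μG (embG j) * Complex.normSq (d j) : ℝ) : ℂ) := by
    rw [hSf]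
    conv_lhs => rw [hfd, hu']
    rw [Stmt9Aux.innerM_expand m hu'orth (fun j => ((μG (embG j) : ℝ) : ℂ) * d j) d]
    push_cast
    refine Finset.sum_congr rfl fun j _ => ?_
    rw [mul_assoc, Complex.mul_conj]
  -- quadratic form on H
  have hSg : opS mU bU g = fun x => ∑ i, (((μH (embH i) : ℝ) : ℂ) * c i) * uH (embH i) x := by
    conv_lhs => rw [hg]
    rw [Stmt9Aux.opS_sum mU bU c (fun i => uH (embH i))]
    funext x
    refine Finset.sum_congr rfl fun i _ => ?_
    rw [show opS mU bU (uH (embH i)) = fun x => ((μH (embH i) : ℝ) : ℂ) * uH (embH i) x from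
      hHeig (embH i)]
    ring
  have hQH : innerM mU (opS mU bU g) g
      = ((∑ i, μH (embH i) * Complex.normSq (c i) : ℝ) : ℂ) := by
    rw [hSg]
    conv_lhs => rw [hg]
    rw [Stmt9Aux.innerM_expand mU hHorth' (fun i => ((μH (embH i) : ℝ) : ℂ) * c i) c]
    push_cast
    refine Finset.sum_congr rfl fun i _ => ?_
    rw [mul_assoc, Complex.mul_conj]
  -- quadratic form identities
  have hmne : ∀ x, m x ≠ 0 := fun x => (hm x).ne'
  have hmUne : ∀ x : ↥U, mU x ≠ 0 := fun x => (hm ↑x).ne'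
  have hQGD := Stmt9Aux.Q_eq m b hmne f
  have hQHD := Stmt9Aux.Q_eq mU bU hmUne g
  have hrealG : (∑ j, μG (embG j) * Complex.normSq (d j))
      = (1/2) * ∑ x, ∑ y, (b x y + b y x) * Complex.normSq (f x - f y) := by
    have := hQG.symm.trans hQGD
    exact_mod_cast this
  have hrealH : (∑ i, μH (embH i) * Complex.normSq (c i))
      = (1/2) * ∑ x : ↥U, ∑ y : ↥U, (bU x y + bU y x) * Complex.normSq (g x - g y) := by
    have := hQH.symm.trans hQHD
    exact_mod_cast this
  -- Dirichlet comparison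
  have hDle : (∑ x : ↥U, ∑ y : ↥U, (bU x y + bU y x) * Complex.normSq (g x - g y))
      ≤ ∑ x, ∑ y, (b x y + b y x) * Complex.normSq (f x - f y) := by
    have h := Stmt9Aux.D_le b hb U f
    refine le_trans (le_of_eq ?_) h
    refine Finset.sum_congr rfl fun x _ => Finset.sum_congr rfl fun y _ => ?_
    rw [hbU, hgf, hgf]
  -- final chain of real inequalities
  have hleft : μH k * (∑ i, Complex.normSq (c i)) ≤ ∑ i, μH (embH i) * Complex.normSq (c i) := by
    rw [Finset.mul_sum]
    refine Finset.sum_le_sum fun i _ => ?_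
    refine mul_le_mul_of_nonneg_right ?_ (Complex.normSq_nonneg _)
    refine hHmono ?_
    rw [Fin.le_def, show (embH i).1 = k.1 + i.1 from rfl]
    omega
  have hright : (∑ j, μG (embG j) * Complex.normSq (d j))
      ≤ μG ⟨n - r + k.1, by omega⟩ * (∑ j, Complex.normSq (d j)) := by
    rw [Finset.mul_sum]
    refine Finset.sum_le_sum fun j _ => ?_
    refine mul_le_mul_of_nonneg_right ?_ (Complex.normSq_nonneg _)
    refine hGmono ?_
    rw [Fin.le_def]
    show j.1 ≤ n - r + k.1
    have := j.isLt
    omega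
  have hchain : μH k * (∑ i, Complex.normSq (c i))
      ≤ μG ⟨n - r + k.1, by omega⟩ * (∑ i, Complex.normSq (c i)) := by
    calc μH k * (∑ i, Complex.normSq (c i)) ≤ ∑ i, μH (embH i) * Complex.normSq (c i) := hleft
      _ = (1/2) * ∑ x : ↥U, ∑ y : ↥U, (bU x y + bU y x) * Complex.normSq (g x - g y) := hrealH
      _ ≤ (1/2) * ∑ x, ∑ y, (b x y + b y x) * Complex.normSq (f x - f y) := by linarith
      _ = ∑ j, μG (embG j) * Complex.normSq (d j) := hrealG.symm
      _ ≤ μG ⟨n - r + k.1, by omega⟩ * (∑ j, Complex.normSq (d j)) := hright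
      _ = μG ⟨n - r + k.1, by omega⟩ * (∑ i, Complex.normSq (c i)) := by rw [hND]
  exact le_of_mul_le_mul_right hchain hpos
end

section
/- Let G be a finite directed weighted graph satisfying the Kirchhoff assumption which is H-flower-like with respect to a subgraph H with #V_H = r. Then for every 1 ≤ k ≤ r, the k-th smallest eigenvalue of S_G is at most the k-th smallest eigenvalue of S_H: λ_k(S_G) ≤ λ_k(S_H). -/
open Finset

section Aux
variable {W ι : Type*} [Fintype W] [Fintype ι]

lemma innerM_sum_left (m : W → ℝ) (c : ι → ℂ) (w : ι → W → ℂ) (g : W → ℂ) :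
    innerM m (fun x => ∑ i, c i * w i x) g = ∑ i, c i * innerM m (w i) g := by
  simp only [innerM, Finset.mul_sum, Finset.sum_mul]
  rw [Finset.sum_comm]
  exact Finset.sum_congr rfl fun i _ => Finset.sum_congr rfl fun x _ => by ring

lemma innerM_sum_right (m : W → ℝ) (c : ι → ℂ) (w : ι → W → ℂ) (g : W → ℂ) :
    innerM m g (fun x => ∑ i, c i * w i x) =
      ∑ i, (starRingEnd ℂ) (c i) * innerM m g (w i) := by
  simp only [innerM, map_sum, map_mul, Finset.mul_sum, Finset.sum_mul]
  rw [Finset.sum_comm]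
  exact Finset.sum_congr rfl fun i _ => Finset.sum_congr rfl fun x _ => by ring

lemma innerM_smul_left (m : W → ℝ) (c : ℂ) (w g : W → ℂ) :
    innerM m (fun x => c * w x) g = c * innerM m w g := by
  simp only [innerM, Finset.mul_sum]
  exact Finset.sum_congr rfl fun x _ => by ring

lemma innerM_self (m : W → ℝ) (f : W → ℂ) :
    innerM m f f = ((∑ x, m x * Complex.normSq (f x) : ℝ) : ℂ) := by
  simp only [innerM]
  push_cast
  exact Finset.sum_congr rfl fun x _ => by
    rw [mul_assoc, Complex.mul_conj]

lemma opS_sum (m : W → ℝ) (b : W → W → ℝ) (c : ι → ℂ) (w : ι → W → ℂ) :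
    opS m b (fun x => ∑ i, c i * w i x) = fun x => ∑ i, c i * opS m b (w i) x := by
  funext x
  simp only [opS, ← Finset.sum_sub_distrib, ← mul_sub, Finset.mul_sum]
  rw [Finset.sum_comm]
  exact Finset.sum_congr rfl fun i _ => Finset.sum_congr rfl fun y _ => by ring

lemma innerM_opS (m : W → ℝ) (b : W → W → ℝ) (hm : ∀ x, m x ≠ 0) (f : W → ℂ) :
    innerM m (opS m b f) f =
      ∑ x, ∑ y, ((b x y + b y x : ℝ) : ℂ) * (f x - f y) * (starRingEnd ℂ) (f x) := by
  simp only [innerM, opS]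
  refine Finset.sum_congr rfl fun x _ => ?_
  have hmx : (m x : ℂ) ≠ 0 := by exact_mod_cast hm x
  have : (m x : ℂ) * (1 / (m x : ℂ) * ∑ y, ((b x y + b y x : ℝ) : ℂ) * (f x - f y))
      * (starRingEnd ℂ) (f x)
      = (∑ y, ((b x y + b y x : ℝ) : ℂ) * (f x - f y)) * (starRingEnd ℂ) (f x) := by
    field_simp
  rw [this, Finset.sum_mul]

lemma innerM_opS_sym (m : W → ℝ) (b : W → W → ℝ) (hm : ∀ x, m x ≠ 0) (f : W → ℂ) :
    innerM m (opS m b f) f =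
      (((1:ℝ)/2) * ∑ x, ∑ y, (b x y + b y x) * Complex.normSq (f x - f y) : ℝ) := by
  have h := innerM_opS m b hm f
  have hswap : ∑ x, ∑ y, ((b x y + b y x : ℝ) : ℂ) * (f x - f y) * (starRingEnd ℂ) (f x)
      = ∑ x, ∑ y, ((b x y + b y x : ℝ) : ℂ) * (f y - f x) * (starRingEnd ℂ) (f y) := by
    rw [Finset.sum_comm]
    refine Finset.sum_congr rfl fun x _ => Finset.sum_congr rfl fun y _ => ?_
    have hc : b y x + b x y = b x y + b y x := by ring
    rw [hc]
  have h2 : (2:ℂ) * innerM m (opS m b f) f =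
      ∑ x, ∑ y, ((b x y + b y x : ℝ) : ℂ) * ((f x - f y) * (starRingEnd ℂ) (f x - f y)) := by
    calc (2:ℂ) * innerM m (opS m b f) f
        = (∑ x, ∑ y, ((b x y + b y x : ℝ) : ℂ) * (f x - f y) * (starRingEnd ℂ) (f x))
          + ∑ x, ∑ y, ((b x y + b y x : ℝ) : ℂ) * (f y - f x) * (starRingEnd ℂ) (f y) := by
          rw [h, ← hswap]; ring
      _ = ∑ x, ∑ y, ((b x y + b y x : ℝ) : ℂ) * ((f x - f y) * (starRingEnd ℂ) (f x - f y)) := by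
          rw [← Finset.sum_add_distrib]
          refine Finset.sum_congr rfl fun x _ => ?_
          rw [← Finset.sum_add_distrib]
          refine Finset.sum_congr rfl fun y _ => ?_
          simp only [map_sub]
          ring
  simp only [Complex.mul_conj] at h2
  push_cast at h2 ⊢
  linear_combination h2 / 2

end Aux

lemma exists_ne_zero_map_eq_zero' {M N : Type*} [AddCommGroup M] [Module ℂ M]
    [AddCommGroup N] [Module ℂ N] [FiniteDimensional ℂ M] [FiniteDimensional ℂ N]
    (f : M →ₗ[ℂ] N) (h : Module.finrank ℂ N < Module.finrank ℂ M) :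
    ∃ x, x ≠ 0 ∧ f x = 0 := by
  by_contra hc
  push_neg at hc
  have hinj : Function.Injective f := by
    rw [← LinearMap.ker_eq_bot, LinearMap.ker_eq_bot']
    intro x hx
    by_contra hxne
    exact hc x hxne hx
  exact absurd (LinearMap.finrank_le_finrank_of_injective hinj) (by omega)

lemma orthonormal_expansion {W : Type*} [Fintype W] (m : W → ℝ) {N : ℕ}
    (hN : N = Fintype.card W) (u : Fin N → (W → ℂ))
    (hON : ∀ i j, innerM m (u i) (u j) = if i = j then 1 else 0) (f : W → ℂ) :
    f = fun x => ∑ i, innerM m f (u i) * u i x := by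
  have hli : LinearIndependent ℂ u := by
    rw [Fintype.linearIndependent_iff]
    intro g hg i
    have hfun : (fun x => ∑ j, g j * u j x) = (0 : W → ℂ) := by
      funext x
      have := congrFun hg x
      simpa using this
    have h0 : innerM m (fun x => ∑ j, g j * u j x) (u i) = 0 := by
      rw [hfun]; simp [innerM]
    rw [innerM_sum_left] at h0
    simpa [hON, mul_ite, Finset.sum_ite_eq'] using h0
  have hspan : Submodule.span ℂ (Set.range u) = ⊤ :=
    hli.span_eq_top_of_card_eq_finrank' (by simp [hN, Module.finrank_pi])
  have hmem : f ∈ Submodule.span ℂ (Set.range u) := hspan ▸ Submodule.mem_top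
  obtain ⟨e, he⟩ := (Submodule.mem_span_range_iff_exists_fun ℂ).1 hmem
  have hef : f = fun x => ∑ i, e i * u i x := by
    funext x
    rw [← he]
    simp [Finset.sum_apply]
  have hcoef : ∀ i, innerM m f (u i) = e i := by
    intro i
    rw [hef, innerM_sum_left]
    simp [hON, mul_ite, Finset.sum_ite_eq']
  simp only [hcoef]
  exact hef

section Combo
variable {W ι : Type*} [Fintype W] [Fintype ι] [DecidableEq ι] (m : W → ℝ) (b : W → W → ℝ)
  (u : ι → W → ℂ) (hON : ∀ i j, innerM m (u i) (u j) = if i = j then 1 else 0)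

include hON

lemma innerM_combo_combo (c e : ι → ℂ) :
    innerM m (fun x => ∑ i, c i * u i x) (fun x => ∑ i, e i * u i x)
      = ∑ i, c i * (starRingEnd ℂ) (e i) := by
  rw [innerM_sum_left]
  refine Finset.sum_congr rfl fun i _ => ?_
  rw [innerM_sum_right]
  simp [hON, mul_ite, mul_one, mul_zero, Finset.sum_ite_eq]

lemma innerM_self_combo (c : ι → ℂ) :
    innerM m (fun x => ∑ i, c i * u i x) (fun x => ∑ i, c i * u i x)
      = ((∑ i, Complex.normSq (c i) : ℝ) : ℂ) := by
  rw [innerM_combo_combo m u hON c c]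
  push_cast
  exact Finset.sum_congr rfl fun i _ => by rw [Complex.mul_conj]

lemma innerM_opS_combo (μ : ι → ℝ)
    (hEig : ∀ i, opS m b (u i) = fun x => ((μ i : ℝ) : ℂ) * u i x) (c : ι → ℂ) :
    innerM m (opS m b (fun x => ∑ i, c i * u i x)) (fun x => ∑ i, c i * u i x)
      = ((∑ i, μ i * Complex.normSq (c i) : ℝ) : ℂ) := by
  have hS : opS m b (fun x => ∑ i, c i * u i x) = fun x => ∑ i, (c i * (μ i : ℂ)) * u i x := by
    rw [opS_sum]
    funext x
    refine Finset.sum_congr rfl fun i _ => ?_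
    rw [hEig i]
    ring
  rw [hS, innerM_combo_combo m u hON]
  push_cast
  refine Finset.sum_congr rfl fun i _ => ?_
  rw [mul_comm (c i) ((μ i : ℝ) : ℂ), mul_assoc, Complex.mul_conj]

end Combo

/-- if the finite directed weighted graph `G` (satisfying the Kirchhoff
assumption) is `H`-flower-like with respect to a subgraph `H` on vertex set `VH`
(`#VH = r`, `#V = n`), then for every `1 ≤ k ≤ r`, `λ_k(S_G) ≤ λ_k(S_H)`. -/
theorem stmt10 {V : Type*} [Fintype V] (m : V → ℝ) (b : V → V → ℝ)
    (hm : ∀ x, 0 < m x) (hb : ∀ x y, 0 ≤ b x y) (hloop : ∀ x, b x x = 0)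
    (hconn : ConnectedGraph b) (hkirch : Kirchhoff b)
    (VH : Finset V)
    -- the flower-like structure: a family `(H_i)_{i ∈ I}` of subgraphs, given by their
    -- vertex sets `Hi i`
    {I : Type*} (Hi : I → Finset V)
    (hcover : (Set.univ : Set V) = ↑VH ∪ ⋃ i, interiorSet b ↑(Hi i))
    (hdisjoint : ∀ i j, i ≠ j →
      Disjoint (interiorSet b ↑(Hi i)) (interiorSet b ↑(Hi j)))
    (hsep : ∀ i j, i ≠ j → ∀ x ∈ interiorSet b ↑(Hi i), ∀ y ∈ interiorSet b ↑(Hi j),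
      ¬ Nbr b x y)
    (hmeet : ∀ i, ∃ xi : V, (↑VH : Set V) ∩ ↑(Hi i) = {xi})
    (n r : ℕ) (hn : n = Fintype.card V) (hr : r = VH.card) (hrn : r ≤ n)
    (μG : Fin n → ℝ) (μH : Fin r → ℝ)
    (hμG : IsMonoEigenListing m (opS m b) μG)
    (hμH : IsMonoEigenListing (fun x : ↥VH => m ↑x) (opSsub m b VH) μH) :
    ∀ k : Fin r, μG ⟨k.1, by have := k.isLt; omega⟩ ≤ μH k := by
  classical
  obtain ⟨hμGmono, u, huON, huEig⟩ := hμG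
  obtain ⟨hμHmono, v, hvON, hvEig⟩ := hμH
  intro k
  have hkr : k.1 < r := k.isLt
  have hkn : k.1 < n := lt_of_lt_of_le hkr hrn
  -- petal choices
  have hcov : ∀ x : V, x ∉ VH → ∃ i, x ∈ interiorSet b ↑(Hi i) := by
    intro x hx
    have hx2 : x ∈ (Set.univ : Set V) := Set.mem_univ x
    rw [hcover] at hx2
    rcases hx2 with h | h
    · exact absurd h hx
    · simpa using h
  choose xi hxi using hmeet
  have hximem : ∀ i, xi i ∈ (↑VH : Set V) ∩ ↑(Hi i) := by
    intro i
    rw [hxi i]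
    rfl
  have hxiVH : ∀ i, xi i ∈ VH := fun i => (hximem i).1
  set σ : V → ↥VH := fun x =>
    if h : x ∈ VH then ⟨x, h⟩ else ⟨xi (Classical.choose (hcov x h)), hxiVH _⟩ with hσ
  have hσVH : ∀ (x : V) (h : x ∈ VH), σ x = ⟨x, h⟩ := fun x h => dif_pos h
  have hσout : ∀ (x : V) (h : ¬ x ∈ VH),
      σ x = ⟨xi (Classical.choose (hcov x h)), hxiVH _⟩ := fun x h => dif_neg h
  have hedge : ∀ x y : V, Nbr b x y → (x ∈ VH ∧ y ∈ VH) ∨ σ x = σ y := by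
    intro x y hnbr
    by_cases hx : x ∈ VH <;> by_cases hy : y ∈ VH
    · exact Or.inl ⟨hx, hy⟩
    · right
      have hyint := Classical.choose_spec (hcov y hy)
      have hxHi : x ∈ (↑(Hi (Classical.choose (hcov y hy))) : Set V) :=
        hyint.2 x (Or.symm hnbr)
      have hxmem : x ∈ (↑VH : Set V) ∩ ↑(Hi (Classical.choose (hcov y hy))) := ⟨hx, hxHi⟩
      rw [hxi _] at hxmem
      rw [hσVH x hx, hσout y hy]
      exact Subtype.ext hxmem
    · right
      have hxint := Classical.choose_spec (hcov x hx)
      have hyHi : y ∈ (↑(Hi (Classical.choose (hcov x hx))) : Set V) := hxint.2 y hnbr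
      have hymem : y ∈ (↑VH : Set V) ∩ ↑(Hi (Classical.choose (hcov x hx))) := ⟨hy, hyHi⟩
      rw [hxi _] at hymem
      rw [hσVH y hy, hσout x hx]
      exact Subtype.ext hymem.symm
    · right
      have hxint := Classical.choose_spec (hcov x hx)
      have hyint := Classical.choose_spec (hcov y hy)
      have hij : Classical.choose (hcov x hx) = Classical.choose (hcov y hy) := by
        by_contra hne
        exact hsep _ _ hne x hxint y hyint hnbr
      rw [hσout x hx, hσout y hy]
      exact Subtype.ext (by rw [hij])
  -- the linear system
  set g : Fin r → V → ℂ := fun j x => v j (σ x) with hg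
  set A : Fin r → Fin k.1 → ℂ :=
    fun j l => innerM m (g j) (u ⟨l.1, by omega⟩) with hA
  set ψ : (Fin r → ℂ) →ₗ[ℂ] ((Fin k.1 → ℂ) × (Fin (r - (k.1 + 1)) → ℂ)) :=
    { toFun := fun c =>
        (fun l => ∑ j, c j * A j l, fun t => c ⟨t.1 + k.1 + 1, by have := t.2; omega⟩)
      map_add' := by
        intro c c'
        refine Prod.ext ?_ ?_ <;> funext l <;>
          simp [add_mul, Finset.sum_add_distrib]
      map_smul' := by
        intro a c
        refine Prod.ext ?_ ?_ <;> funext l <;>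
          simp [Finset.mul_sum, mul_assoc] } with hψ
  have hrank : Module.finrank ℂ ((Fin k.1 → ℂ) × (Fin (r - (k.1 + 1)) → ℂ))
      < Module.finrank ℂ (Fin r → ℂ) := by
    rw [Module.finrank_prod, Module.finrank_pi, Module.finrank_pi, Module.finrank_pi]
    simp only [Fintype.card_fin]
    omega
  obtain ⟨c, hc0, hcker⟩ := exists_ne_zero_map_eq_zero' ψ hrank
  have hcorth : ∀ l : Fin k.1, ∑ j, c j * A j l = 0 := by
    intro l
    exact congrFun (congrArg Prod.fst hcker) l
  have hchigh : ∀ j : Fin r, k.1 < j.1 → c j = 0 := by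
    intro j hj
    have h2 := congrFun (congrArg Prod.snd hcker) ⟨j.1 - (k.1 + 1), by omega⟩
    have e : j = ⟨j.1 - (k.1 + 1) + k.1 + 1, by omega⟩ := Fin.ext (by simp; omega)
    rw [e]
    exact h2
  -- the test function
  set w : ↥VH → ℂ := fun z => ∑ j, c j * v j z with hw
  set f : V → ℂ := fun x => ∑ j, c j * v j (σ x) with hf
  have hfw : ∀ x : ↥VH, f ↑x = w x := by
    intro x
    have hx : σ ↑x = x := by rw [hσVH ↑x x.2]
    simp only [hf, hw]
    rw [hx]
  have hmne : ∀ x : V, m x ≠ 0 := fun x => ne_of_gt (hm x)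
  -- orthogonality to the first k eigenfunctions of G
  have horth : ∀ l : Fin n, l.1 < k.1 → innerM m f (u l) = 0 := by
    intro l hl
    have h1 := hcorth ⟨l.1, hl⟩
    have h2 : innerM m f (u l) = ∑ j, c j * innerM m (g j) (u l) :=
      innerM_sum_left m c g (u l)
    have h3 : (⟨l.1, by omega⟩ : Fin n) = l := Fin.ext rfl
    rw [h2]
    rw [hA] at h1
    simpa [h3] using h1
  -- expansion of f in eigenbasis of G
  set d : Fin n → ℂ := fun i => innerM m f (u i) with hd
  have hexp : f = fun x => ∑ i, d i * u i x := orthonormal_expansion m hn u huON f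
  -- quadratic form values
  have hQG : innerM m (opS m b f) f = ((∑ i, μG i * Complex.normSq (d i) : ℝ) : ℂ) := by
    rw [hexp]
    exact innerM_opS_combo m b u huON μG huEig d
  have hNf : innerM m f f = ((∑ i, Complex.normSq (d i) : ℝ) : ℂ) := by
    rw [hexp]
    exact innerM_self_combo m u huON d
  have hQH : innerM (fun x : ↥VH => m ↑x) (opSsub m b VH w) w
      = ((∑ j, μH j * Complex.normSq (c j) : ℝ) : ℂ) := by
    rw [hw]
    exact innerM_opS_combo _ _ v hvON μH hvEig c
  have hNw : innerM (fun x : ↥VH => m ↑x) w w = ((∑ j, Complex.normSq (c j) : ℝ) : ℂ) := by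
    rw [hw]
    exact innerM_self_combo _ v hvON c
  -- the key identity Q_G(f) = Q_H(w)
  have hQGH : innerM m (opS m b f) f
      = innerM (fun x : ↥VH => m ↑x) (opSsub m b VH w) w := by
    have hsub : opSsub m b VH w
        = opS (fun x : ↥VH => m ↑x) (fun x y : ↥VH => b ↑x ↑y) w := rfl
    rw [hsub, innerM_opS m b hmne f,
      innerM_opS (fun x : ↥VH => m ↑x) (fun x y : ↥VH => b ↑x ↑y) (fun x => hmne ↑x) w]
    have hzero : ∀ x y : V, ¬(x ∈ VH ∧ y ∈ VH) →
        ((b x y + b y x : ℝ) : ℂ) * (f x - f y) * (starRingEnd ℂ) (f x) = 0 := by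
      intro x y hxy
      by_cases hab : b x y + b y x = 0
      · rw [hab]
        simp
      · have hnbr : Nbr b x y := by
          rcases lt_or_eq_of_le (hb x y) with h | h
          · exact Or.inl h
          · refine Or.inr (lt_of_le_of_ne (hb y x) ?_)
            intro h2
            exact hab (by rw [← h, ← h2]; ring)
        rcases hedge x y hnbr with h | h
        · exact absurd h hxy
        · have : f x = f y := by
            rw [hf]
            simp only [h]
          rw [this, sub_self, mul_zero, zero_mul]
    have step1 : ∑ x : V, ∑ y : V,
          ((b x y + b y x : ℝ) : ℂ) * (f x - f y) * (starRingEnd ℂ) (f x)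
        = ∑ x ∈ VH, ∑ y ∈ VH,
          ((b x y + b y x : ℝ) : ℂ) * (f x - f y) * (starRingEnd ℂ) (f x) := by
      rw [← Finset.sum_subset (Finset.subset_univ VH)]
      · refine Finset.sum_congr rfl fun x hx => ?_
        rw [← Finset.sum_subset (Finset.subset_univ VH)]
        intro y _ hy
        exact hzero x y fun hh => hy hh.2
      · intro x _ hx
        exact Finset.sum_eq_zero fun y _ => hzero x y fun hh => hx hh.1
    rw [step1, ← Finset.sum_coe_sort VH]
    refine Finset.sum_congr rfl fun x _ => ?_
    rw [← Finset.sum_coe_sort VH]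
    refine Finset.sum_congr rfl fun y _ => ?_
    rw [hfw x, hfw y]
  -- nonnegativity of μH k
  have hμHk0 : 0 ≤ μH k := by
    have h1 := innerM_opS_sym (fun x : ↥VH => m ↑x) (fun x y : ↥VH => b ↑x ↑y)
      (fun x => hmne ↑x) (v k)
    rw [show opS (fun x : ↥VH => m ↑x) (fun x y : ↥VH => b ↑x ↑y) (v k)
      = opSsub m b VH (v k) from rfl] at h1
    have h2 : innerM (fun x : ↥VH => m ↑x) (opSsub m b VH (v k)) (v k) = ((μH k : ℝ) : ℂ) := by
      rw [hvEig k, innerM_smul_left, hvON k k]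
      simp
    have h3 : (μH k : ℝ) = (1:ℝ)/2 * ∑ x : ↥VH, ∑ y : ↥VH,
        (b ↑x ↑y + b ↑y ↑x) * Complex.normSq (v k x - v k y) :=
      Complex.ofReal_injective (h2.symm.trans h1)
    rw [h3]
    apply mul_nonneg (by norm_num)
    refine Finset.sum_nonneg fun x _ => Finset.sum_nonneg fun y _ => ?_
    exact mul_nonneg (add_nonneg (hb _ _) (hb _ _)) (Complex.normSq_nonneg _)
  -- real quantities
  have hE : (∑ i, μG i * Complex.normSq (d i)) = ∑ j, μH j * Complex.normSq (c j) :=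
    Complex.ofReal_injective ((hQG.symm.trans hQGH).trans hQH)
  have hNfw : (∑ j, Complex.normSq (c j)) ≤ ∑ i, Complex.normSq (d i) := by
    have e1 : ((∑ j, Complex.normSq (c j) : ℝ) : ℂ) = innerM (fun x : ↥VH => m ↑x) w w :=
      hNw.symm
    have e2 := innerM_self (fun x : ↥VH => m ↑x) w
    have e3 := innerM_self m f
    have r1 : (∑ j, Complex.normSq (c j)) = ∑ x : ↥VH, m ↑x * Complex.normSq (w x) :=
      Complex.ofReal_injective (e1.trans e2)
    have r2 : (∑ i, Complex.normSq (d i)) = ∑ x : V, m x * Complex.normSq (f x) :=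
      Complex.ofReal_injective (hNf.symm.trans e3)
    rw [r1, r2]
    have r3 : ∑ x : ↥VH, m ↑x * Complex.normSq (w x)
        = ∑ x ∈ VH, m x * Complex.normSq (f x) := by
      rw [← Finset.sum_coe_sort VH]
      exact Finset.sum_congr rfl fun x _ => by rw [hfw x]
    rw [r3]
    refine Finset.sum_le_sum_of_subset_of_nonneg (Finset.subset_univ VH) fun x _ _ => ?_
    exact mul_nonneg (le_of_lt (hm x)) (Complex.normSq_nonneg _)
  have hcpos : 0 < ∑ j, Complex.normSq (c j) := by
    obtain ⟨j0, hj0⟩ := Function.ne_iff.1 hc0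
    refine Finset.sum_pos' (fun j _ => Complex.normSq_nonneg _) ⟨j0, Finset.mem_univ _, ?_⟩
    exact Complex.normSq_pos.mpr hj0
  have hdpos : 0 < ∑ i, Complex.normSq (d i) := lt_of_lt_of_le hcpos hNfw
  -- the two eigenvalue inequalities
  have i1 : μG ⟨k.1, by omega⟩ * ∑ i, Complex.normSq (d i)
      ≤ ∑ i, μG i * Complex.normSq (d i) := by
    rw [Finset.mul_sum]
    refine Finset.sum_le_sum fun i _ => ?_
    by_cases hi : i.1 < k.1
    · have : d i = 0 := horth i hi
      rw [this]
      simp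
    · refine mul_le_mul_of_nonneg_right ?_ (Complex.normSq_nonneg _)
      exact hμGmono (by rw [Fin.le_def]; simpa using Nat.le_of_not_lt hi)
  have i2 : (∑ j, μH j * Complex.normSq (c j)) ≤ μH k * ∑ j, Complex.normSq (c j) := by
    rw [Finset.mul_sum]
    refine Finset.sum_le_sum fun j _ => ?_
    by_cases hj : k.1 < j.1
    · have : c j = 0 := hchigh j hj
      rw [this]
      simp
    · refine mul_le_mul_of_nonneg_right ?_ (Complex.normSq_nonneg _)
      exact hμHmono (by rw [Fin.le_def]; omega)
  -- assembly
  have final : μG ⟨k.1, by omega⟩ * ∑ i, Complex.normSq (d i)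
      ≤ μH k * ∑ i, Complex.normSq (d i) := by
    calc μG ⟨k.1, by omega⟩ * ∑ i, Complex.normSq (d i)
        ≤ ∑ i, μG i * Complex.normSq (d i) := i1
      _ = ∑ j, μH j * Complex.normSq (c j) := hE
      _ ≤ μH k * ∑ j, Complex.normSq (c j) := i2
      _ ≤ μH k * ∑ i, Complex.normSq (d i) := mul_le_mul_of_nonneg_left hNfw hμHk0
  exact le_of_mul_le_mul_right final hdpos
end

section
/- Let G^s be a finite simple symmetric tree (an undirected tree with all edge weights b(x,y) = b(y,x) = 1 on its edges and vertex weight m ≡ 1), and let 2q = max_{x∈V} v(x) be its maximal valency. Then the increasingly ordered eigenvalues of S_{G^s} satisfy λ_k(S_{G^s}) ≤ 2 for every k = 1,…,q, and λ_{q+1}(S_{G^s}) ≤ 2(q+1). -/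
open Finset

/-! Min-max principle: if the compression of `S` to an orthonormal family of `d` test vectors is
diagonal with entries at most `c`, a nonzero combination of them orthogonal to the first `k < d`
eigenvectors has Rayleigh quotient between `λ_{k+1}` and `c`. For `S_{G^s}` the test vectors are the
indicators `δ_x` of an independent set `F` of vertices of degree at most one: then
`⟨δ_x, S δ_y⟩ = 2 deg(x) [x = y] - 2 [x ~ y]` is diagonal with entries `2 deg x ≤ 2`. If `q ≥ 1`,
counting degrees (`∑ deg = 2(|V| - 1)`, all degrees positive) shows a tree has at least as many
leaves as its maximal degree `2q ≥ q + 1`, and two adjacent leaves would make the tree a single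
edge, of maximal degree `1 ≠ 2q`. If `q = 0`, a single vertex is such a set.
-/
open RCLike
open scoped InnerProductSpace

section MinMax

variable {𝕜 E : Type*} [RCLike 𝕜] [NormedAddCommGroup E] [InnerProductSpace 𝕜 E]

theorem exists_ne_zero_forall_inner_sum_smul_eq_zero {ι κ : Type*} [Fintype ι] [Fintype κ]
    (e : ι → E) (v : κ → E) (hcard : Fintype.card κ < Fintype.card ι) :
    ∃ l : ι → 𝕜, l ≠ 0 ∧ ∀ j, ⟪v j, ∑ i, l i • e i⟫_𝕜 = 0 := by
  let Φ : (ι → 𝕜) →ₗ[𝕜] κ → 𝕜 :=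
    LinearMap.pi fun j => innerₛₗ 𝕜 (v j) ∘ₗ Fintype.linearCombination 𝕜 e
  obtain ⟨l, hl, hne⟩ := (Submodule.ne_bot_iff _).mp
    (LinearMap.ker_ne_bot_of_finrank_lt (f := Φ) (by simpa using hcard))
  exact ⟨l, hne, fun j => by simpa [Φ, Fintype.linearCombination_apply] using congr_fun hl j⟩

theorem OrthonormalBasis.mul_norm_sq_le_re_inner_of_inner_eq_zero {N : ℕ}
    (B : OrthonormalBasis (Fin N) 𝕜 E) {T : E →ₗ[𝕜] E} {μ : Fin N → ℝ} (hμ : Monotone μ)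
    (hT : ∀ i, T (B i) = (μ i : 𝕜) • B i) {k : Fin N} {w : E}
    (hw : ∀ i < k, ⟪B i, w⟫_𝕜 = 0) :
    μ k * ‖w‖ ^ 2 ≤ re ⟪w, T w⟫_𝕜 := by
  have hexp : ⟪w, T w⟫_𝕜 = ∑ i, (μ i : 𝕜) * (‖⟪B i, w⟫_𝕜‖ ^ 2 : ℝ) := by
    have hTw : T w = ∑ i, (⟪B i, w⟫_𝕜 * μ i) • B i := by
      conv_lhs => rw [← B.sum_repr' w]
      simp only [map_sum, map_smul, hT, smul_smul]
    rw [hTw, inner_sum]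
    refine sum_congr rfl fun i _ => ?_
    rw [inner_smul_right, ← inner_conj_symm w, mul_right_comm, RCLike.mul_conj]
    push_cast; ring
  rw [← B.sum_sq_norm_inner_right w, mul_sum, hexp, map_sum]
  refine sum_le_sum fun i _ => ?_
  rw [← ofReal_mul, ofReal_re]
  rcases lt_or_ge i k with hi | hi
  · simp [hw i hi]
  · exact mul_le_mul_of_nonneg_right (hμ hi) (by positivity)

theorem Orthonormal.re_inner_sum_smul_map_le {ι : Type*} [Fintype ι] {e : ι → E}
    (he : Orthonormal 𝕜 e) {T : E →ₗ[𝕜] E} {c : ℝ}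
    (hdiag : ∀ a b, a ≠ b → ⟪e a, T (e b)⟫_𝕜 = 0) (hle : ∀ a, re ⟪e a, T (e a)⟫_𝕜 ≤ c)
    (l : ι → 𝕜) :
    re ⟪∑ a, l a • e a, T (∑ a, l a • e a)⟫_𝕜 ≤ c * ‖∑ a, l a • e a‖ ^ 2 := by
  have hexp : ⟪∑ a, l a • e a, T (∑ a, l a • e a)⟫_𝕜 =
      ∑ a, (‖l a‖ ^ 2 : ℝ) * ⟪e a, T (e a)⟫_𝕜 := by
    simp only [map_sum, map_smul, sum_inner, inner_sum, inner_smul_left, inner_smul_right]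
    refine sum_congr rfl fun a _ => ?_
    rw [sum_eq_single a (fun b _ hb => by rw [hdiag b a hb, mul_zero]) (by simp),
      ← mul_assoc, RCLike.mul_conj]
    push_cast; ring
  have hnorm : ‖∑ a, l a • e a‖ ^ 2 = ∑ a, ‖l a‖ ^ 2 := by
    rw [← inner_self_eq_norm_sq (𝕜 := 𝕜), he.inner_sum, map_sum]
    refine sum_congr rfl fun a _ => ?_
    rw [mul_comm, RCLike.mul_conj]
    norm_cast
  rw [hexp, hnorm, map_sum, mul_sum]
  refine sum_le_sum fun a _ => ?_
  rw [re_ofReal_mul, mul_comm c]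
  exact mul_le_mul_of_nonneg_left (hle a) (by positivity)

theorem OrthonormalBasis.le_of_diagonal_compression {N : ℕ}
    (B : OrthonormalBasis (Fin N) 𝕜 E) {T : E →ₗ[𝕜] E} {μ : Fin N → ℝ} (hμ : Monotone μ)
    (hT : ∀ i, T (B i) = (μ i : 𝕜) • B i) {ι : Type*} [Fintype ι] {e : ι → E}
    (he : Orthonormal 𝕜 e) {c : ℝ}
    (hdiag : ∀ a b, a ≠ b → ⟪e a, T (e b)⟫_𝕜 = 0) (hle : ∀ a, re ⟪e a, T (e a)⟫_𝕜 ≤ c)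
    {k : Fin N} (hk : (k : ℕ) < Fintype.card ι) :
    μ k ≤ c := by
  obtain ⟨l, hl, hperp⟩ := exists_ne_zero_forall_inner_sum_smul_eq_zero (𝕜 := 𝕜) e
    (fun i : Fin k => B (Fin.castLT i (i.2.trans k.2))) (by simpa using hk)
  have hw : 0 < ‖∑ a, l a • e a‖ ^ 2 := by
    refine pow_pos (norm_pos_iff.mpr fun h => hl ?_) 2
    exact funext (Fintype.linearIndependent_iff.mp he.linearIndependent l h)
  refine le_of_mul_le_mul_right ?_ hw
  calc μ k * ‖∑ a, l a • e a‖ ^ 2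
      ≤ re ⟪∑ a, l a • e a, T (∑ a, l a • e a)⟫_𝕜 :=
        B.mul_norm_sq_le_re_inner_of_inner_eq_zero hμ hT fun i hi => hperp ⟨i, hi⟩
    _ ≤ c * ‖∑ a, l a • e a‖ ^ 2 := he.re_inner_sum_smul_map_le hdiag hle l

end MinMax

@[simps]
noncomputable def opSₗ {W : Type*} [Fintype W] (m : W → ℝ) (b : W → W → ℝ) :
    (W → ℂ) →ₗ[ℂ] W → ℂ where
  toFun := opS m b
  map_add' f g := by
    funext x
    simp only [opS, Pi.add_apply, ← mul_add, ← sum_add_distrib]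
    congr 1
    exact sum_congr rfl fun y _ => by ring
  map_smul' c f := by
    funext x
    simp only [opS, Pi.smul_apply, smul_eq_mul, RingHom.id_apply, mul_sum]
    exact sum_congr rfl fun y _ => by ring

theorem inner_toLp_toLp_eq_innerM_one {W : Type*} [Fintype W] (f g : W → ℂ) :
    ⟪(WithLp.toLp 2 f : EuclideanSpace ℂ W), WithLp.toLp 2 g⟫_ℂ = innerM (fun _ => 1) g f := by
  simp [PiLp.inner_apply, innerM]

theorem IsMonoEigenListing.exists_orthonormalBasis {W : Type*} [Fintype W]
    {S : (W → ℂ) →ₗ[ℂ] W → ℂ} {μ : Fin (Fintype.card W) → ℝ}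
    (hμ : IsMonoEigenListing (fun _ => 1) S μ) :
    ∃ B : OrthonormalBasis (Fin (Fintype.card W)) ℂ (EuclideanSpace ℂ W),
      ∀ i, (WithLp.linearEquiv 2 ℂ (W → ℂ)).symm.conj S (B i) = (μ i : ℂ) • B i := by
  obtain ⟨-, u, horth, heig⟩ := hμ
  have hu : Orthonormal ℂ fun i => (WithLp.toLp 2 (u i) : EuclideanSpace ℂ W) := by
    rw [orthonormal_iff_ite]
    intro i j
    rw [inner_toLp_toLp_eq_innerM_one, horth]
    exact if_congr eq_comm rfl rfl
  refine ⟨OrthonormalBasis.mk hu ?_, fun i => ?_⟩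
  · exact (hu.linearIndependent.span_eq_top_of_card_eq_finrank' (by simp)).ge
  · rw [OrthonormalBasis.coe_mk]
    exact congrArg (WithLp.toLp 2) (heig i)

theorem EuclideanSpace.inner_single_conj_single {W : Type*} [Fintype W] [DecidableEq W]
    (S : (W → ℂ) →ₗ[ℂ] W → ℂ) (x y : W) :
    ⟪EuclideanSpace.single x (1 : ℂ),
      (WithLp.linearEquiv 2 ℂ (W → ℂ)).symm.conj S (EuclideanSpace.single y 1)⟫_ℂ =
      S (Pi.single y 1) x := by
  simp [EuclideanSpace.inner_single_left, LinearEquiv.conj_apply]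

namespace SimpleGraph

theorem Preconnected.eq_or_eq_of_adj_of_degree_eq_one {V : Type*} {G : SimpleGraph V}
    (hG : G.Preconnected)
    {u v : V} [Fintype (G.neighborSet u)] [Fintype (G.neighborSet v)]
    (hu : G.degree u = 1) (hv : G.degree v = 1) (huv : G.Adj u v) (w : V) : w = u ∨ w = v := by
  obtain ⟨p⟩ := hG u w
  suffices ∀ {a b : V}, G.Walk a b → a = u ∨ a = v → b = u ∨ b = v from this p (.inl rfl)
  intro a b p
  induction p with
  | nil => exact id
  | cons h _ ih =>
    rintro (rfl | rfl)
    · exact ih (.inr ((degree_eq_one_iff_existsUnique_adj.mp hu).unique h huv))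
    · exact ih (.inl ((degree_eq_one_iff_existsUnique_adj.mp hv).unique h huv.symm))

variable {V : Type*} [Fintype V] (G : SimpleGraph V) [DecidableRel G.Adj]

theorem opS_single [DecidableEq V] (x y : V) :
    opS (fun _ => 1) (fun x y => if G.Adj x y then 1 else 0) (Pi.single y 1) x =
      2 * ((if x = y then (G.degree x : ℂ) else 0) - if G.Adj x y then 1 else 0) := by
  have hweight : ∀ z, (((if G.Adj x z then 1 else 0) + (if G.Adj z x then 1 else 0) : ℝ) : ℂ) =
      2 * if G.Adj x z then 1 else 0 := fun z => by
    simp only [G.adj_comm z x]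
    split_ifs <;> norm_num
  simp only [opS, Complex.ofReal_one, div_one, one_mul, hweight, mul_sub, mul_assoc,
    sum_sub_distrib, ← mul_sum]
  rw [← sum_mul, sum_boole, ← neighborFinset_eq_filter, card_neighborFinset_eq_degree]
  simp only [Pi.single_apply, mul_ite, mul_one, mul_zero, sum_ite_eq', mem_univ, if_true]

variable {G}

theorem IsTree.degree_le_card_degree_eq_one (hG : G.IsTree) (x : V) :
    G.degree x ≤ #{v | G.degree v = 1} := by
  classical
  rcases subsingleton_or_nontrivial V with hV | hV
  · have : G.degree x = 0 := by
      by_contra h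
      obtain ⟨y, hxy⟩ := (G.degree_pos_iff_exists_adj x).mp (Nat.pos_of_ne_zero h)
      exact G.ne_of_adj hxy (Subsingleton.elim x y)
    omega
  · have hpos : ∀ v, 0 < G.degree v := fun v =>
      hG.connected.preconnected.degree_pos_of_nontrivial v
    have hsplit := add_sum_erase univ (fun v => G.degree v) (mem_univ x)
    have hlower : ∑ v ∈ univ.erase x, 2 ≤
        ∑ v ∈ univ.erase x, (G.degree v + if G.degree v = 1 then 1 else 0) :=
      sum_le_sum fun v _ => by have := hpos v; split_ifs <;> omega
    have hleaves : ∑ v ∈ univ.erase x, (if G.degree v = 1 then 1 else 0) ≤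
        #{v | G.degree v = 1} := by
      rw [card_filter]
      exact sum_le_sum_of_subset (erase_subset x univ)
    rw [sum_add_distrib, sum_const, card_erase_of_mem (mem_univ x), card_univ,
      smul_eq_mul] at hlower
    have hedges := hG.card_edgeFinset
    have hdegsum := G.sum_degrees_eq_twice_card_edges
    omega

theorem IsTree.exists_isIndepSet_degree_le_one (hG : G.IsTree) {q : ℕ}
    (hq : 2 * q = univ.sup fun x => G.degree x) :
    ∃ F : Finset V, q < #F ∧ G.IsIndepSet (F : Set V) ∧ ∀ x ∈ F, G.degree x ≤ 1 := by
  have := hG.connected.nonempty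
  have hmax (x : V) : G.degree x ≤ 2 * q :=
    hq ▸ le_sup (f := fun x => G.degree x) (mem_univ x)
  obtain ⟨x₀, -, hx₀⟩ := exists_mem_eq_sup univ univ_nonempty fun x => G.degree x
  rcases Nat.eq_zero_or_pos q with rfl | hq
  · exact ⟨{x₀}, by simp, by simp, fun x _ => by have := hmax x; omega⟩
  · refine ⟨univ.filter fun v => G.degree v = 1, ?_, ?_, fun x hx => (mem_filter.mp hx).2.le⟩
    · have := hG.degree_le_card_degree_eq_one x₀
      omega
    · intro u hu v hv _ huv
      simp only [coe_filter, mem_univ, true_and, Set.mem_ofPred_eq] at hu hv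
      rcases hG.connected.preconnected.eq_or_eq_of_adj_of_degree_eq_one hu hv huv x₀
        with rfl | rfl <;> omega

end SimpleGraph

/-- let `G^s` be a finite simple symmetric tree (a tree with all edge weights
equal to `1` and vertex weight `m ≡ 1`) and let `2q` be its maximal valency.  Then the
increasingly ordered eigenvalues of `S_{G^s}` satisfy `λ_k(S_{G^s}) ≤ 2` for `k = 1, …, q`
and `λ_{q+1}(S_{G^s}) ≤ 2(q+1)`. -/
theorem stmt11 {V : Type*} [Fintype V] (G : SimpleGraph V) [DecidableRel G.Adj]
    (htree : G.IsTree)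
    (n q : ℕ) (hn : n = Fintype.card V)
    (hq : 2 * q = Finset.univ.sup (fun x => G.degree x))
    (μ : Fin n → ℝ)
    (hμ : IsMonoEigenListing (fun _ : V => (1 : ℝ))
      (opS (fun _ : V => (1 : ℝ)) (fun x y : V => if G.Adj x y then (1 : ℝ) else 0)) μ) :
    (∀ k : Fin n, k.1 < q → μ k ≤ 2) ∧
    (∀ k : Fin n, k.1 = q → μ k ≤ 2 * (q + 1)) := by
  classical
  subst hn
  set S := opSₗ (fun _ : V => (1 : ℝ)) fun x y : V => if G.Adj x y then (1 : ℝ) else 0 with hS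
  obtain ⟨B, hB⟩ := IsMonoEigenListing.exists_orthonormalBasis (S := S) hμ
  obtain ⟨F, hqF, hF, hdeg⟩ := htree.exists_isIndepSet_degree_le_one hq
  have hcompression (x y : V) :
      ⟪EuclideanSpace.single x (1 : ℂ), (WithLp.linearEquiv 2 ℂ (V → ℂ)).symm.conj S
        (EuclideanSpace.single y 1)⟫_ℂ =
      2 * ((if x = y then (G.degree x : ℂ) else 0) - if G.Adj x y then 1 else 0) := by
    rw [EuclideanSpace.inner_single_conj_single, hS, opSₗ_apply, G.opS_single]
  have hle_two (k : Fin (Fintype.card V)) (hk : k.1 ≤ q) : μ k ≤ 2 := by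
    refine B.le_of_diagonal_compression hμ.1 hB
      (EuclideanSpace.orthonormal_single.comp _ Subtype.val_injective) (fun x y hxy => ?_)
      (fun x => ?_) (by rw [Fintype.card_coe]; exact hk.trans_lt hqF)
    · simp only [Function.comp_apply, hcompression, if_neg (Subtype.coe_ne_coe.mpr hxy),
        if_neg (hF x.2 y.2 (Subtype.coe_ne_coe.mpr hxy))]
      ring
    · simp only [Function.comp_apply, hcompression]
      simpa [RCLike.re_to_complex] using hdeg x x.2
  refine ⟨fun k hk => hle_two k hk.le, fun k hk => (hle_two k hk.le).trans ?_⟩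
  linarith [q.cast_nonneg (α := ℝ)]
end

section
/- Let G be a finite connected directed weighted graph satisfying the Kirchhoff assumption, and U ⊆ V a nonempty subset. Then the smallest eigenvalue of the Dirichlet operator S^D_U satisfies λ_min(S^D_U) ≤ 2·Re(λ) for every eigenvalue λ of the Dirichlet Laplacian Δ^D_U, and the largest eigenvalue satisfies λ_max(S^D_U) ≥ 2·Re(λ) for every eigenvalue λ of Δ^D_U. -/
open Finset

/-! For an eigenfunction `f` of `Δ^D_U` with eigenvalue `λ`, the Kirchhoff assumption makes the
form of the transposed weights the complex conjugate of the form of `b`, so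
`(S^D_U f, f)_m = 2 Re (Δ^D_U f, f)_m = 2 Re λ · (f, f)_m`.  Multiplication by `√m` turns
`(·,·)_m` into the Euclidean inner product and the `m`-self-adjoint `S^D_U` into a symmetric
operator, whose Rayleigh quotients lie between its smallest and largest eigenvalues. -/

open Module.End

theorem LinearMap.IsSymmetric.exists_hasEigenvalue_le_rayleigh {𝕜 E : Type*} [RCLike 𝕜]
    [NormedAddCommGroup E] [InnerProductSpace 𝕜 E] [FiniteDimensional 𝕜 E]
    {T : E →ₗ[𝕜] E} (hT : T.IsSymmetric) {x : E} (hx : x ≠ 0) :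
    ∃ μ : ℝ, HasEigenvalue T μ ∧ μ ≤ RCLike.re (inner 𝕜 (T x) x) / ‖x‖ ^ 2 := by
  have : Nontrivial E := ⟨⟨x, 0, hx⟩⟩
  obtain ⟨C, hC⟩ := (LinearMap.toContinuousLinearMap T).bddAbove_rayleighQuotient
  refine ⟨_, hT.hasEigenvalue_iInf_of_finiteDimensional, ?_⟩
  refine ciInf_le ⟨-C, ?_⟩ (⟨x, hx⟩ : {x : E // x ≠ 0})
  rintro _ ⟨y, rfl⟩
  exact neg_le_of_abs_le (hC ⟨y, rfl⟩)

theorem LinearMap.IsSymmetric.exists_hasEigenvalue_rayleigh_le {𝕜 E : Type*} [RCLike 𝕜]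
    [NormedAddCommGroup E] [InnerProductSpace 𝕜 E] [FiniteDimensional 𝕜 E]
    {T : E →ₗ[𝕜] E} (hT : T.IsSymmetric) {x : E} (hx : x ≠ 0) :
    ∃ μ : ℝ, HasEigenvalue T μ ∧ RCLike.re (inner 𝕜 (T x) x) / ‖x‖ ^ 2 ≤ μ := by
  have : Nontrivial E := ⟨⟨x, 0, hx⟩⟩
  obtain ⟨C, hC⟩ := (LinearMap.toContinuousLinearMap T).bddAbove_rayleighQuotient
  refine ⟨_, hT.hasEigenvalue_iSup_of_finiteDimensional, ?_⟩
  refine le_ciSup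
    (f := fun y : {y : E // y ≠ 0} => RCLike.re (inner 𝕜 (T y) (y : E)) / ‖(y : E)‖ ^ 2)
    ⟨C, ?_⟩ ⟨x, hx⟩
  rintro _ ⟨y, rfl⟩
  exact le_of_abs_le (hC ⟨y, rfl⟩)

section Weighted

variable {W : Type*} {m : W → ℝ}

variable (m) in
noncomputable def sqrtWeightEquiv (hm : ∀ x, 0 < m x) : (W → ℂ) ≃ₗ[ℂ] EuclideanSpace ℂ W :=
  (LinearEquiv.piCongrRight fun x => LinearEquiv.smulOfNeZero ℂ ℂ (√(m x) : ℂ)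
    (by exact_mod_cast (Real.sqrt_pos.mpr (hm x)).ne')).trans
    (WithLp.linearEquiv 2 ℂ (W → ℂ)).symm

theorem sqrtWeightEquiv_apply (hm : ∀ x, 0 < m x) (f : W → ℂ) (x : W) :
    sqrtWeightEquiv m hm f x = √(m x) * f x := rfl

theorem exists_eigenvector_of_hasEigenvalue_conj (hm : ∀ x, 0 < m x)
    {S : (W → ℂ) →ₗ[ℂ] (W → ℂ)} {μ : ℂ}
    (hμ : HasEigenvalue ((sqrtWeightEquiv m hm).conj S) μ) :
    ∃ g, g ≠ 0 ∧ S g = μ • g := by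
  obtain ⟨v, hv⟩ := hμ.exists_hasEigenvector
  refine ⟨(sqrtWeightEquiv m hm).symm v, by simpa using hv.2, ?_⟩
  simpa [LinearEquiv.conj_apply_apply] using
    congrArg (sqrtWeightEquiv m hm).symm hv.apply_eq_smul

variable [Fintype W]

theorem conj_innerM (f g : W → ℂ) : starRingEnd ℂ (innerM m f g) = innerM m g f := by
  simp only [innerM, map_sum, map_mul, Complex.conj_ofReal, Complex.conj_conj]
  exact Finset.sum_congr rfl fun x _ => by ring

theorem innerM_smul_left_s16 (a : ℂ) (f g : W → ℂ) : innerM m (a • f) g = a * innerM m f g := by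
  simp only [innerM, Pi.smul_apply, smul_eq_mul, Finset.mul_sum]
  exact Finset.sum_congr rfl fun x _ => by ring

theorem innerM_self_im (f : W → ℂ) : (innerM m f f).im = 0 := by
  simp only [innerM, Complex.im_sum, mul_assoc, Complex.mul_conj, ← Complex.ofReal_mul,
    Complex.ofReal_im, Finset.sum_const_zero]

theorem inner_sqrtWeightEquiv (hm : ∀ x, 0 < m x) (f g : W → ℂ) :
    inner ℂ (sqrtWeightEquiv m hm f) (sqrtWeightEquiv m hm g) = innerM m g f := by
  simp only [PiLp.inner_apply, sqrtWeightEquiv_apply, RCLike.inner_apply, map_mul,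
    Complex.conj_ofReal, innerM]
  refine Finset.sum_congr rfl fun x _ => ?_
  have hsq : (√(m x) : ℂ) * √(m x) = m x := by exact_mod_cast Real.mul_self_sqrt (hm x).le
  linear_combination (g x * starRingEnd ℂ (f x)) * hsq

theorem re_innerM_self_pos (hm : ∀ x, 0 < m x) {f : W → ℂ} (hf : f ≠ 0) :
    0 < (innerM m f f).re := by
  rw [← inner_sqrtWeightEquiv hm]
  exact (re_inner_self_pos (𝕜 := ℂ)).2 ((sqrtWeightEquiv m hm).map_ne_zero_iff.2 hf)

variable {S : (W → ℂ) →ₗ[ℂ] (W → ℂ)}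

theorem isSymmetric_conj_sqrtWeightEquiv (hm : ∀ x, 0 < m x)
    (hS : ∀ f g, innerM m (S f) g = innerM m f (S g)) :
    ((sqrtWeightEquiv m hm).conj S).IsSymmetric := by
  intro u v
  obtain ⟨f, rfl⟩ := (sqrtWeightEquiv m hm).surjective u
  obtain ⟨g, rfl⟩ := (sqrtWeightEquiv m hm).surjective v
  simp only [LinearEquiv.conj_apply_apply, LinearEquiv.symm_apply_apply, inner_sqrtWeightEquiv,
    hS]

theorem rayleigh_conj_sqrtWeightEquiv (hm : ∀ x, 0 < m x) (f : W → ℂ) :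
    RCLike.re (inner ℂ ((sqrtWeightEquiv m hm).conj S (sqrtWeightEquiv m hm f))
        (sqrtWeightEquiv m hm f)) / ‖sqrtWeightEquiv m hm f‖ ^ 2
      = (innerM m (S f) f).re / (innerM m f f).re := by
  rw [← inner_self_eq_norm_sq (𝕜 := ℂ)]
  simp only [LinearEquiv.conj_apply_apply, LinearEquiv.symm_apply_apply, inner_sqrtWeightEquiv]
  rw [← conj_innerM (S f), RCLike.conj_re]
  rfl

theorem exists_eigenvector_le_rayleigh (hm : ∀ x, 0 < m x)
    (hS : ∀ f g, innerM m (S f) g = innerM m f (S g)) {f : W → ℂ} (hf : f ≠ 0) :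
    ∃ μ : ℝ, (∃ g, g ≠ 0 ∧ S g = (μ : ℂ) • g) ∧
      μ ≤ (innerM m (S f) f).re / (innerM m f f).re := by
  obtain ⟨μ, hμ, hle⟩ := (isSymmetric_conj_sqrtWeightEquiv hm hS).exists_hasEigenvalue_le_rayleigh
      ((sqrtWeightEquiv m hm).map_ne_zero_iff.2 hf)
  rw [rayleigh_conj_sqrtWeightEquiv] at hle
  exact ⟨μ, exists_eigenvector_of_hasEigenvalue_conj hm hμ, hle⟩

theorem exists_eigenvector_rayleigh_le (hm : ∀ x, 0 < m x)
    (hS : ∀ f g, innerM m (S f) g = innerM m f (S g)) {f : W → ℂ} (hf : f ≠ 0) :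
    ∃ μ : ℝ, (∃ g, g ≠ 0 ∧ S g = (μ : ℂ) • g) ∧
      (innerM m (S f) f).re / (innerM m f f).re ≤ μ := by
  obtain ⟨μ, hμ, hle⟩ := (isSymmetric_conj_sqrtWeightEquiv hm hS).exists_hasEigenvalue_rayleigh_le
      ((sqrtWeightEquiv m hm).map_ne_zero_iff.2 hf)
  rw [rayleigh_conj_sqrtWeightEquiv] at hle
  exact ⟨μ, exists_eigenvector_of_hasEigenvalue_conj hm hμ, hle⟩

end Weighted

section DirichletEnergy

variable {V : Type*} [Fintype V]

def dirichletEnergy (c : V → V → ℝ) (F G : V → ℂ) : ℂ :=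
  ∑ x, ∑ y, (c x y : ℂ) * (F x - F y) * starRingEnd ℂ (G x)

theorem conj_dirichletEnergy {c : V → V → ℝ} (hc : ∀ x y, c x y = c y x) (F G : V → ℂ) :
    starRingEnd ℂ (dirichletEnergy c F G) = dirichletEnergy c G F := by
  simp only [dirichletEnergy, map_sum, map_mul, map_sub, Complex.conj_ofReal, Complex.conj_conj,
    mul_sub, sub_mul, Finset.sum_sub_distrib]
  congr 1
  · exact Finset.sum_congr rfl fun x _ => Finset.sum_congr rfl fun y _ => by ring
  · rw [Finset.sum_comm]
    exact Finset.sum_congr rfl fun x _ => Finset.sum_congr rfl fun y _ => by rw [hc]; ring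

theorem dirichletEnergy_add (c c' : V → V → ℝ) (F G : V → ℂ) :
    dirichletEnergy (fun x y => c x y + c' x y) F G
      = dirichletEnergy c F G + dirichletEnergy c' F G := by
  simp only [dirichletEnergy, ← Finset.sum_add_distrib]
  exact Finset.sum_congr rfl fun x _ => Finset.sum_congr rfl fun y _ => by push_cast; ring

theorem dirichletEnergy_transpose_self {b : V → V → ℝ} (hb : Kirchhoff b) (F : V → ℂ) :
    dirichletEnergy (fun x y => b y x) F F = starRingEnd ℂ (dirichletEnergy b F F) := by
  simp only [dirichletEnergy, map_sum, map_mul, map_sub, Complex.conj_ofReal, Complex.conj_conj,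
    mul_sub, sub_mul, Finset.sum_sub_distrib]
  congr 1
  · refine Finset.sum_congr rfl fun x _ => ?_
    have hx : ∑ y, (b x y : ℂ) = ∑ y, (b y x : ℂ) := by exact_mod_cast hb x
    simp only [mul_assoc, ← Finset.sum_mul, hx, mul_comm (F x)]
  · rw [Finset.sum_comm]
    exact Finset.sum_congr rfl fun x _ => Finset.sum_congr rfl fun y _ => by ring

theorem dirichletEnergy_add_transpose {b : V → V → ℝ} (hb : Kirchhoff b) (F : V → ℂ) :
    dirichletEnergy (fun x y => b x y + b y x) F F
      = dirichletEnergy b F F + starRingEnd ℂ (dirichletEnergy b F F) := by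
  rw [dirichletEnergy_add, dirichletEnergy_transpose_self hb]

end DirichletEnergy

section DirichletOp

variable {V : Type*} [Fintype V] [DecidableEq V]

def extendByZero (U : Finset V) (f : ↥U → ℂ) (y : V) : ℂ :=
  if h : y ∈ U then f ⟨y, h⟩ else 0

noncomputable def dirichletOp (m : V → ℝ) (c : V → V → ℝ) (U : Finset V) :
    (↥U → ℂ) →ₗ[ℂ] (↥U → ℂ) where
  toFun f x := (1 / (m x : ℂ)) * ∑ y, ((c x y : ℝ) : ℂ) * (f x - extendByZero U f y)
  map_add' f g := by
    ext x
    simp only [Pi.add_apply, ← mul_add, ← Finset.sum_add_distrib]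
    congr 1
    refine Finset.sum_congr rfl fun y _ => ?_
    by_cases hy : y ∈ U <;>
      simp only [extendByZero, hy, dite_true, dite_false, Pi.add_apply] <;> ring
  map_smul' a f := by
    ext x
    simp only [Pi.smul_apply, smul_eq_mul, RingHom.id_apply, Finset.mul_sum]
    refine Finset.sum_congr rfl fun y _ => ?_
    by_cases hy : y ∈ U <;>
      simp only [extendByZero, hy, dite_true, dite_false, Pi.smul_apply, smul_eq_mul] <;> ring

theorem opSDir_eq_dirichletOp (m : V → ℝ) (b : V → V → ℝ) (U : Finset V) :
    opSDir m b U = dirichletOp m (fun x y => b x y + b y x) U := rfl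

theorem opDeltaDir_eq_dirichletOp (m : V → ℝ) (b : V → V → ℝ) (U : Finset V) :
    opDeltaDir m b U = dirichletOp m b U := rfl

theorem innerM_dirichletOp {m : V → ℝ} (hm : ∀ x, m x ≠ 0) (c : V → V → ℝ) (U : Finset V)
    (f g : ↥U → ℂ) :
    innerM (fun x : ↥U => m x) (dirichletOp m c U f) g
      = dirichletEnergy c (extendByZero U f) (extendByZero U g) := by
  have hext : ∀ (φ : ↥U → ℂ) (x : ↥U), extendByZero U φ x = φ x := by simp [extendByZero]
  rw [dirichletEnergy, ← Finset.sum_subset (Finset.subset_univ U), ← Finset.sum_coe_sort U]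
  · refine Finset.sum_congr rfl fun x _ => ?_
    simp only [dirichletOp, LinearMap.coe_mk, AddHom.coe_mk, hext]
    rw [← mul_assoc, mul_one_div_cancel (by exact_mod_cast hm x), one_mul, Finset.sum_mul]
  · intro x _ hx
    simp [extendByZero, hx]

theorem innerM_dirichletOp_comm {m : V → ℝ} (hm : ∀ x, m x ≠ 0) {c : V → V → ℝ}
    (hc : ∀ x y, c x y = c y x) (U : Finset V) (f g : ↥U → ℂ) :
    innerM (fun x : ↥U => m x) (dirichletOp m c U f) g
      = innerM (fun x : ↥U => m x) f (dirichletOp m c U g) := by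
  rw [← conj_innerM (dirichletOp m c U g), innerM_dirichletOp hm, innerM_dirichletOp hm,
    conj_dirichletEnergy hc]

theorem re_innerM_dirichletOp_add_transpose {m : V → ℝ} (hm : ∀ x, m x ≠ 0) {b : V → V → ℝ}
    (hb : Kirchhoff b) (U : Finset V) (f : ↥U → ℂ) :
    (innerM (fun x : ↥U => m x) (dirichletOp m (fun x y => b x y + b y x) U f) f).re
      = 2 * (innerM (fun x : ↥U => m x) (dirichletOp m b U f) f).re := by
  rw [innerM_dirichletOp hm, innerM_dirichletOp hm, dirichletEnergy_add_transpose hb,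
    Complex.add_re, Complex.conj_re]
  ring

end DirichletOp

theorem stmt16_general {V : Type*} [Fintype V] [DecidableEq V] (m : V → ℝ) (b : V → V → ℝ)
    (hm : ∀ x, 0 < m x) (hkirch : Kirchhoff b) (U : Finset V) (lamMin lamMax : ℝ)
    (hmin : IsLeast {t : ℝ | ∃ f : ↥U → ℂ, f ≠ 0 ∧
      opSDir m b U f = fun x => ((t : ℝ) : ℂ) * f x} lamMin)
    (hmax : IsGreatest {t : ℝ | ∃ f : ↥U → ℂ, f ≠ 0 ∧
      opSDir m b U f = fun x => ((t : ℝ) : ℂ) * f x} lamMax) :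
    ∀ lam : ℂ, (∃ f : ↥U → ℂ, f ≠ 0 ∧ opDeltaDir m b U f = fun x => lam * f x) →
      lamMin ≤ 2 * lam.re ∧ 2 * lam.re ≤ lamMax := by
  rintro lam ⟨f, hf0, hf⟩
  rw [opSDir_eq_dirichletOp] at hmin hmax
  rw [opDeltaDir_eq_dirichletOp] at hf
  have hmU : ∀ x : ↥U, 0 < m x := fun x => hm x
  have hm0 : ∀ x, m x ≠ 0 := fun x => (hm x).ne'
  have hS := innerM_dirichletOp_comm hm0 (fun x y => add_comm (b x y) (b y x)) U
  have hΔf : dirichletOp m b U f = lam • f := hf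
  have hrayleigh : (innerM (fun x : ↥U => m x)
      (dirichletOp m (fun x y => b x y + b y x) U f) f).re / (innerM (fun x : ↥U => m x) f f).re
      = 2 * lam.re := by
    rw [re_innerM_dirichletOp_add_transpose hm0 hkirch, hΔf, innerM_smul_left_s16, Complex.mul_re,
      innerM_self_im, mul_zero, sub_zero]
    field_simp [(re_innerM_self_pos hmU hf0).ne']
  obtain ⟨μ, ⟨g, hg0, hg⟩, hμ⟩ := exists_eigenvector_le_rayleigh hmU hS hf0
  obtain ⟨μ', ⟨g', hg0', hg'⟩, hμ'⟩ := exists_eigenvector_rayleigh_le hmU hS hf0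
  rw [hrayleigh] at hμ hμ'
  exact ⟨(hmin.2 ⟨g, hg0, hg⟩).trans hμ, hμ'.trans (hmax.2 ⟨g', hg0', hg'⟩)⟩

/-- let `G` be a finite connected directed weighted graph satisfying the
Kirchhoff assumption and `U ⊆ V` a nonempty subset.  Then the smallest eigenvalue of the
Dirichlet operator `S^D_U` satisfies `λ_min(S^D_U) ≤ 2 Re(λ)` for every eigenvalue `λ` of
the Dirichlet Laplacian `Δ^D_U`, and the largest one satisfies `2 Re(λ) ≤ λ_max(S^D_U)`. -/
theorem stmt16 {V : Type*} [Fintype V] [DecidableEq V] (m : V → ℝ) (b : V → V → ℝ)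
    (hm : ∀ x, 0 < m x) (hb : ∀ x y, 0 ≤ b x y) (hloop : ∀ x, b x x = 0)
    (hconn : ConnectedGraph b) (hkirch : Kirchhoff b)
    (U : Finset V) (hU : U.Nonempty)
    (lamMin lamMax : ℝ)
    (hmin : IsLeast {t : ℝ | ∃ f : ↥U → ℂ, f ≠ 0 ∧
      opSDir m b U f = fun x => ((t : ℝ) : ℂ) * f x} lamMin)
    (hmax : IsGreatest {t : ℝ | ∃ f : ↥U → ℂ, f ≠ 0 ∧
      opSDir m b U f = fun x => ((t : ℝ) : ℂ) * f x} lamMax) :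
    ∀ lam : ℂ, (∃ f : ↥U → ℂ, f ≠ 0 ∧ opDeltaDir m b U f = fun x => lam * f x) →
      lamMin ≤ 2 * lam.re ∧ 2 * lam.re ≤ lamMax :=
  stmt16_general m b hm hkirch U lamMin lamMax hmin hmax
end

section
/- Let H be a connected subgraph of a finite connected directed weighted graph G satisfying the Kirchhoff assumption, with #V_G = n and #V_H = r. Then for every 1 ≤ k ≤ r, the k-th smallest eigenvalue of the Dirichlet operator S^D_H is at most the (k + n − r)-th smallest eigenvalue of S_G: λ_k(S^D_H) ≤ λ_{k+n−r}(S_G). -/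
/-!
Courant–Fischer. Some nonzero combination `F` of the first `k + n - r` eigenfunctions of `S_G`
vanishes off `U` (`n - r` linear conditions) and is orthogonal on `U` to the first `k - 1`
eigenfunctions of `S^D_U` (`k - 1` more). On functions supported in `U` the operators `S^D_U`
and `S_G` agree, so the Rayleigh quotient of `F` is at least `λ_k(S^D_U)`, by the
orthogonality, and at most `λ_{k+n-r}(S_G)`, by the choice of the span.
-/

open Finset

open ComplexConjugate

section InnerM

variable {W ι : Type*} [Fintype W] (m : W → ℝ)

theorem innerM_sum_smul_left [Fintype ι] (c : ι → ℂ) (f : ι → W → ℂ) (g : W → ℂ) :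
    innerM m (∑ i, c i • f i) g = ∑ i, c i * innerM m (f i) g := by
  simp only [innerM, Finset.sum_apply, Pi.smul_apply, smul_eq_mul, Finset.mul_sum,
    Finset.sum_mul]
  rw [Finset.sum_comm]
  exact Finset.sum_congr rfl fun _ _ => Finset.sum_congr rfl fun _ _ => by ring

theorem innerM_sum_smul_right [Fintype ι] (f : W → ℂ) (c : ι → ℂ) (g : ι → W → ℂ) :
    innerM m f (∑ i, c i • g i) = ∑ i, conj (c i) * innerM m f (g i) := by
  simp only [innerM, Finset.sum_apply, Pi.smul_apply, smul_eq_mul, map_sum, map_mul,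
    Finset.mul_sum]
  rw [Finset.sum_comm]
  exact Finset.sum_congr rfl fun _ _ => Finset.sum_congr rfl fun _ _ => by ring

theorem innerM_eq_innerM_restrict {V : Type*} [Fintype V] (m : V → ℝ) (U : Finset V)
    (f g : V → ℂ) (hg : ∀ x ∉ U, g x = 0) :
    innerM m f g = innerM (fun x : U => m x) (fun x : U => f x) (fun x : U => g x) := by
  rw [innerM, innerM, Finset.sum_coe_sort U (fun x => (m x : ℂ) * f x * conj (g x))]
  exact (Finset.sum_subset (Finset.subset_univ U) fun x _ hx => by simp [hg x hx]).symm

variable [DecidableEq ι]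

def IsOrthonormalM (u : ι → W → ℂ) : Prop :=
  ∀ i j, innerM m (u i) (u j) = if i = j then 1 else 0

namespace IsOrthonormalM

variable {m} {u : ι → W → ℂ}

theorem comp_injective (hu : IsOrthonormalM m u) {κ : Type*} [DecidableEq κ] {e : κ → ι}
    (he : Function.Injective e) : IsOrthonormalM m (u ∘ e) := fun i j => by
  simp only [Function.comp, hu (e i) (e j), he.eq_iff]

variable [Fintype ι]

theorem innerM_sum_smul_left (hu : IsOrthonormalM m u) (c : ι → ℂ) (j : ι) :
    innerM m (∑ i, c i • u i) (u j) = c j := by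
  simp [_root_.innerM_sum_smul_left, hu _ j]

theorem innerM_sum_smul (hu : IsOrthonormalM m u) (a c : ι → ℂ) :
    innerM m (∑ i, a i • u i) (∑ i, c i • u i) = ∑ i, a i * conj (c i) := by
  simp [innerM_sum_smul_right, hu.innerM_sum_smul_left, mul_comm]

theorem linearIndependent (hu : IsOrthonormalM m u) : LinearIndependent ℂ u :=
  Fintype.linearIndependent_iff.mpr fun c hc j => by
    have h := hu.innerM_sum_smul_left c j
    rw [hc] at h
    simpa [innerM] using h.symm

theorem sum_innerM_smul (hu : IsOrthonormalM m u) (hcard : Fintype.card ι = Fintype.card W)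
    (g : W → ℂ) : ∑ j, innerM m g (u j) • u j = g := by
  have hspan := hu.linearIndependent.span_eq_top_of_card_eq_finrank' (by simpa using hcard)
  obtain ⟨c, rfl⟩ := (Submodule.mem_span_range_iff_exists_fun ℂ).mp
    (hspan ▸ Submodule.mem_top (x := g))
  simp only [hu.innerM_sum_smul_left]

end IsOrthonormalM

end InnerM

namespace IsOrthonormalM

variable {W ι : Type*} [Fintype W] [Fintype ι] [DecidableEq ι] {m : W → ℝ} {u : ι → W → ℂ}

theorem innerM_sum_smul_self (hu : IsOrthonormalM m u) (c : ι → ℂ) :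
    innerM m (∑ i, c i • u i) (∑ i, c i • u i) = ((∑ i, Complex.normSq (c i) : ℝ) : ℂ) := by
  simp [hu.innerM_sum_smul, Complex.mul_conj]

theorem re_innerM_sum_smul_self_pos (hu : IsOrthonormalM m u) {c : ι → ℂ} (hc : c ≠ 0) :
    0 < (innerM m (∑ i, c i • u i) (∑ i, c i • u i)).re := by
  obtain ⟨i, hi⟩ := Function.ne_iff.mp hc
  rw [hu.innerM_sum_smul_self, Complex.ofReal_re]
  exact Finset.sum_pos' (fun j _ => Complex.normSq_nonneg (c j))
    ⟨i, Finset.mem_univ i, Complex.normSq_pos.mpr hi⟩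

variable {S : (W → ℂ) → (W → ℂ)} {μ : ι → ℝ}

theorem innerM_apply_sum_smul_self (hu : IsOrthonormalM m u) (hS : IsLinearMap ℂ S)
    (heig : ∀ i, S (u i) = (μ i : ℂ) • u i) (c : ι → ℂ) :
    innerM m (S (∑ i, c i • u i)) (∑ i, c i • u i)
      = ((∑ i, μ i * Complex.normSq (c i) : ℝ) : ℂ) := by
  have hSsum : S (∑ i, c i • u i) = ∑ i, (c i * μ i) • u i := by
    change hS.mk' S _ = _
    simp only [map_sum, map_smul, IsLinearMap.mk'_apply, heig, smul_smul]
  rw [hSsum, hu.innerM_sum_smul]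
  push_cast
  exact Finset.sum_congr rfl fun i _ => by rw [mul_right_comm, Complex.mul_conj, mul_comm]

theorem re_innerM_apply_le (hu : IsOrthonormalM m u) (hS : IsLinearMap ℂ S)
    (heig : ∀ i, S (u i) = (μ i : ℂ) • u i) {c : ι → ℂ} {M : ℝ}
    (hc : ∀ i, c i ≠ 0 → μ i ≤ M) :
    (innerM m (S (∑ i, c i • u i)) (∑ i, c i • u i)).re
      ≤ M * (innerM m (∑ i, c i • u i) (∑ i, c i • u i)).re := by
  rw [hu.innerM_apply_sum_smul_self hS heig, hu.innerM_sum_smul_self, Complex.ofReal_re,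
    Complex.ofReal_re, Finset.mul_sum]
  refine Finset.sum_le_sum fun i _ => ?_
  by_cases hci : c i = 0
  · simp [hci]
  · exact mul_le_mul_of_nonneg_right (hc i hci) (Complex.normSq_nonneg _)

theorem le_re_innerM_apply (hu : IsOrthonormalM m u) (hS : IsLinearMap ℂ S)
    (heig : ∀ i, S (u i) = (μ i : ℂ) • u i) {c : ι → ℂ} {M : ℝ}
    (hc : ∀ i, c i ≠ 0 → M ≤ μ i) :
    M * (innerM m (∑ i, c i • u i) (∑ i, c i • u i)).re
      ≤ (innerM m (S (∑ i, c i • u i)) (∑ i, c i • u i)).re := by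
  rw [hu.innerM_apply_sum_smul_self hS heig, hu.innerM_sum_smul_self, Complex.ofReal_re,
    Complex.ofReal_re, Finset.mul_sum]
  refine Finset.sum_le_sum fun i _ => ?_
  by_cases hci : c i = 0
  · simp [hci]
  · exact mul_le_mul_of_nonneg_right (hc i hci) (Complex.normSq_nonneg _)

end IsOrthonormalM

theorem IsOrthonormalM.le_re_innerM_apply_of_orthogonal {W : Type*} [Fintype W] {m : W → ℝ}
    {N : ℕ} {u : Fin N → W → ℂ} (hu : IsOrthonormalM m u) (hcard : N = Fintype.card W)
    {S : (W → ℂ) → (W → ℂ)} (hS : IsLinearMap ℂ S) {μ : Fin N → ℝ}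
    (heig : ∀ i, S (u i) = (μ i : ℂ) • u i) (hμ : Monotone μ) (k : Fin N) (g : W → ℂ)
    (hg : ∀ j < k, innerM m g (u j) = 0) :
    μ k * (innerM m g g).re ≤ (innerM m (S g) g).re := by
  rw [← hu.sum_innerM_smul (by simpa using hcard) g]
  exact hu.le_re_innerM_apply hS heig fun j hj => hμ (not_lt.mp fun hjk => hj (hg j hjk))

theorem Matrix.exists_mulVec_eq_zero_of_card_lt {K κ ι : Type*} [Field K] [Fintype κ]
    [Fintype ι] (A : Matrix κ ι K) (h : Fintype.card κ < Fintype.card ι) :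
    ∃ c ≠ 0, A.mulVec c = 0 := by
  have hker : LinearMap.ker A.mulVecLin ≠ ⊥ :=
    LinearMap.ker_ne_bot_of_finrank_lt (by simpa using h)
  obtain ⟨c, hc, hc0⟩ := Submodule.exists_mem_ne_zero_of_ne_bot hker
  exact ⟨c, hc0, hc⟩

section Graph

variable {V : Type*} [Fintype V] (m : V → ℝ) (b : V → V → ℝ)

theorem isLinearMap_opS : IsLinearMap ℂ (opS m b) where
  map_add f g := by
    funext x
    simp only [opS, Pi.add_apply, ← mul_add, ← Finset.sum_add_distrib]
    congr 1
    exact Finset.sum_congr rfl fun _ _ => by ring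
  map_smul c f := by
    funext x
    simp only [opS, Pi.smul_apply, smul_eq_mul, Finset.mul_sum]
    exact Finset.sum_congr rfl fun _ _ => by ring

variable [DecidableEq V] (U : Finset V)

theorem isLinearMap_opSDir : IsLinearMap ℂ (opSDir m b U) where
  map_add f g := by
    funext x
    simp only [opSDir, Pi.add_apply, ← mul_add, ← Finset.sum_add_distrib]
    congr 1
    refine Finset.sum_congr rfl fun y _ => ?_
    split_ifs <;> ring
  map_smul c f := by
    funext x
    simp only [opSDir, Pi.smul_apply, smul_eq_mul, Finset.mul_sum]
    refine Finset.sum_congr rfl fun y _ => ?_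
    split_ifs <;> ring

theorem opSDir_restrict {F : V → ℂ} (hF : ∀ x ∉ U, F x = 0) :
    opSDir m b U (fun x : U => F x) = fun x : U => opS m b F x := by
  funext x
  simp only [opSDir, opS]
  congr 1
  refine Finset.sum_congr rfl fun y _ => ?_
  by_cases hy : y ∈ U
  · simp [hy]
  · simp [hy, hF y hy]

end Graph

theorem exists_ne_zero_supported_orthogonal {V ι : Type*} [Fintype V] [DecidableEq V]
    [Fintype ι] (m : V → ℝ) (U : Finset V) (w : ι → V → ℂ) {K : ℕ} (u : Fin K → U → ℂ)
    (h : Fintype.card {x // x ∉ U} + K < Fintype.card ι) :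
    ∃ c : ι → ℂ, c ≠ 0 ∧ (∀ x ∉ U, (∑ i, c i • w i) x = 0) ∧
      ∀ j, innerM (fun x : U => m x) (fun x : U => (∑ i, c i • w i) x) (u j) = 0 := by
  let A : Matrix ({x // x ∉ U} ⊕ Fin K) ι ℂ := Matrix.of fun p i =>
    Sum.elim (fun z : {x // x ∉ U} => w i z)
      (fun j => innerM (fun x : U => m x) (fun x : U => w i x) (u j)) p
  obtain ⟨c, hc, hAc⟩ := A.exists_mulVec_eq_zero_of_card_lt (by simpa using h)
  refine ⟨c, hc, fun x hx => ?_, fun j => ?_⟩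
  · simpa [A, Matrix.mulVec, dotProduct, Finset.sum_apply, mul_comm] using
      congrFun hAc (.inl ⟨x, hx⟩)
  · have hrestrict : (fun x : U => (∑ i, c i • w i) x) = ∑ i, c i • fun x : U => w i x := by
      funext x
      simp [Finset.sum_apply]
    rw [hrestrict, innerM_sum_smul_left]
    simpa [A, Matrix.mulVec, dotProduct, mul_comm] using congrFun hAc (.inr j)

/-- let `H` be a connected subgraph (on vertex set `U`, `#U = r`) of a finite
connected directed weighted graph `G` (`#V = n`) satisfying the Kirchhoff assumption.
Then for every `1 ≤ k ≤ r`, `λ_k(S^D_H) ≤ λ_{k+n-r}(S_G)`. -/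
theorem stmt17 {V : Type*} [Fintype V] [DecidableEq V] (m : V → ℝ) (b : V → V → ℝ)
    (U : Finset V)
    (n r : ℕ) (hn : n = Fintype.card V) (hr : r = U.card) (hrn : r ≤ n)
    (μG : Fin n → ℝ) (μD : Fin r → ℝ)
    (hμG : IsMonoEigenListing m (opS m b) μG)
    (hμD : IsMonoEigenListing (fun x : ↥U => m ↑x) (opSDir m b U) μD) :
    ∀ k : Fin r, μD k ≤ μG ⟨k.1 + n - r, by have := k.isLt; omega⟩ := by
  obtain ⟨hmonoG, v, hv, hveig⟩ := hμG
  obtain ⟨hmonoD, u, hu, hueig⟩ := hμD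
  intro k
  have hd : k.1 + (n - r) + 1 ≤ n := by omega
  obtain ⟨c, hc, hsupp, horth⟩ := exists_ne_zero_supported_orthogonal m U
    (fun i => v (Fin.castLE hd i)) (fun j : Fin k => u (Fin.castLE k.2.le j))
    (by simp [Fintype.card_subtype_compl, ← hn, ← hr]; omega)
  have hw : IsOrthonormalM m fun i => v (Fin.castLE hd i) :=
    IsOrthonormalM.comp_injective hv (Fin.castLE_injective hd)
  have hupper := hw.re_innerM_apply_le (isLinearMap_opS m b) (fun i => hveig _) (c := c)
    (M := μG ⟨k.1 + n - r, by omega⟩) fun i _ => hmonoG (by simp [Fin.le_def]; omega)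
  have hlower := IsOrthonormalM.le_re_innerM_apply_of_orthogonal hu (by simp [hr])
    (isLinearMap_opSDir m b U) hueig hmonoD k _ fun j hj => horth ⟨j, hj⟩
  rw [opSDir_restrict m b U hsupp, ← innerM_eq_innerM_restrict m U _ _ hsupp,
    ← innerM_eq_innerM_restrict m U _ _ hsupp] at hlower
  exact le_of_mul_le_mul_right (hlower.trans hupper) (hw.re_innerM_sum_smul_self_pos hc)
end
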